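/- arXiv:1904.05197 — 5 statements merged into one kernel-verified Lean document; each statement's English description precedes it below -/
import Mathlib

section
/- Let X be a topological space and let 𝓑 be a basis for the topology of X such that: (1) every B ∈ 𝓑 is compact and open; (2) 𝓑 is closed under binary intersections; (3) for all B₁, B₂ ∈ 𝓑 the set difference B₁ ∖ B₂ is a finite union of pairwise disjoint members of 𝓑. Then every compact open subset of X is a finite union of pairwise disjoint members of 𝓑. -/
/-!
A compact open set is a finite union `B₁ ∪ ⋯ ∪ Bₙ` of basis sets. Adding the `Bᵢ` one at a time,
`B ∪ S = B ∪ (S \ B)`, and if `S` is a finite disjoint union of basis sets `C`, then `S \ B` is the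
disjoint union of the sets `C \ B`, each of which is again a finite disjoint union of basis sets.
-/

open Set

section

variable {X : Type*} {𝓑 : Set (Set X)}

def IsFiniteDisjointUnion (𝓑 : Set (Set X)) (S : Set X) : Prop :=
  ∃ F : Finset (Set X), ↑F ⊆ 𝓑 ∧ (F : Set (Set X)).Pairwise Disjoint ∧ S = ⋃₀ ↑F

namespace IsFiniteDisjointUnion

theorem empty : IsFiniteDisjointUnion 𝓑 ∅ :=
  ⟨∅, by simp, by simp, by simp⟩

theorem of_mem {B : Set X} (hB : B ∈ 𝓑) : IsFiniteDisjointUnion 𝓑 B :=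
  ⟨{B}, by simpa using hB, by simp, by simp⟩

theorem union {S T : Set X} (hS : IsFiniteDisjointUnion 𝓑 S) (hT : IsFiniteDisjointUnion 𝓑 T)
    (hST : Disjoint S T) : IsFiniteDisjointUnion 𝓑 (S ∪ T) := by
  classical
  obtain ⟨F, hF𝓑, hFd, rfl⟩ := hS
  obtain ⟨G, hG𝓑, hGd, rfl⟩ := hT
  refine ⟨F ∪ G, by simpa using union_subset hF𝓑 hG𝓑, ?_, by simp [sUnion_union]⟩
  rw [Finset.coe_union, pairwise_union_of_symm]
  exact ⟨hFd, hGd, fun C hC D hD _ ↦ hST.mono (subset_sUnion_of_mem hC) (subset_sUnion_of_mem hD)⟩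

theorem biUnion {ι : Type*} {t : Finset ι} {f : ι → Set X}
    (hf : ∀ i ∈ t, IsFiniteDisjointUnion 𝓑 (f i)) (hd : (t : Set ι).PairwiseDisjoint f) :
    IsFiniteDisjointUnion 𝓑 (⋃ i ∈ t, f i) := by
  classical
  induction t using Finset.induction_on with
  | empty => simpa using empty
  | insert i t hi ih =>
    rw [Finset.set_biUnion_insert]
    refine (hf i (t.mem_insert_self i)).union
      (ih (fun j hj ↦ hf j (Finset.mem_insert_of_mem hj)) (hd.subset (by simp))) ?_
    refine disjoint_iUnion₂_right.2 fun j hj ↦ hd (by simp) (by simp [hj]) ?_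
    exact (ne_of_mem_of_not_mem hj hi).symm

theorem sdiff {S B : Set X} (hS : IsFiniteDisjointUnion 𝓑 S)
    (hdiff : ∀ C ∈ 𝓑, IsFiniteDisjointUnion 𝓑 (C \ B)) :
    IsFiniteDisjointUnion 𝓑 (S \ B) := by
  obtain ⟨F, hF𝓑, hFd, rfl⟩ := hS
  rw [sUnion_eq_biUnion, Finset.set_biUnion_coe]
  simp only [iUnion_sdiff]
  exact biUnion (fun C hC ↦ hdiff C (hF𝓑 hC))
    fun C hC D hD hCD ↦ (hFd hC hD hCD).mono sdiff_subset sdiff_subset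

theorem biUnion_of_mem {ι : Type*} (t : Finset ι) {b : ι → Set X} (hb : ∀ i ∈ t, b i ∈ 𝓑)
    (hdiff : ∀ B₁ ∈ 𝓑, ∀ B₂ ∈ 𝓑, IsFiniteDisjointUnion 𝓑 (B₁ \ B₂)) :
    IsFiniteDisjointUnion 𝓑 (⋃ i ∈ t, b i) := by
  classical
  induction t using Finset.induction_on with
  | empty => simpa using empty
  | insert i t _ ih =>
    have hbi : b i ∈ 𝓑 := hb i (t.mem_insert_self i)
    have hrest := ih fun j hj ↦ hb j (Finset.mem_insert_of_mem hj)
    rw [Finset.set_biUnion_insert, ← union_sdiff_self]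
    exact (of_mem hbi).union (hrest.sdiff fun C hC ↦ hdiff C hC _ hbi) disjoint_sdiff_right

end IsFiniteDisjointUnion

end

theorem compact_open_eq_finite_disjoint_union_of_basis_general
    {X : Type*} [TopologicalSpace X] (𝓑 : Set (Set X))
    (hbasis : TopologicalSpace.IsTopologicalBasis 𝓑)
    (hdiff : ∀ B₁ ∈ 𝓑, ∀ B₂ ∈ 𝓑, ∃ F : Finset (Set X), ↑F ⊆ 𝓑 ∧
      (F : Set (Set X)).Pairwise Disjoint ∧ B₁ \ B₂ = ⋃₀ ↑F) :
    ∀ U : Set X, IsCompact U → IsOpen U →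
      ∃ F : Finset (Set X), ↑F ⊆ 𝓑 ∧ (F : Set (Set X)).Pairwise Disjoint ∧ U = ⋃₀ ↑F := by
  intro U hUc hUo
  obtain ⟨s, hs, rfl⟩ := eq_finite_iUnion_of_isTopologicalBasis_of_isCompact_open
    ((↑) : 𝓑 → Set X) (by rwa [Subtype.range_coe]) U hUc hUo
  obtain ⟨t, rfl⟩ := hs.exists_finset_coe
  rw [Finset.set_biUnion_coe]
  exact IsFiniteDisjointUnion.biUnion_of_mem t (fun B _ ↦ B.2) hdiff

/-- Let `X` be a topological space and `𝓑` a basis for its topology such that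
(1) every member of `𝓑` is compact and open, (2) `𝓑` is closed under binary intersections, and
(3) the set difference of any two members of `𝓑` is a finite union of pairwise disjoint members
of `𝓑`.  Then every compact open subset of `X` is a finite union of pairwise disjoint members
of `𝓑`. -/
theorem compact_open_eq_finite_disjoint_union_of_basis
    {X : Type*} [TopologicalSpace X] (𝓑 : Set (Set X))
    (hbasis : TopologicalSpace.IsTopologicalBasis 𝓑)
    (hcompact_open : ∀ B ∈ 𝓑, IsCompact B ∧ IsOpen B)
    (hinter : ∀ B₁ ∈ 𝓑, ∀ B₂ ∈ 𝓑, B₁ ∩ B₂ ∈ 𝓑)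
    (hdiff : ∀ B₁ ∈ 𝓑, ∀ B₂ ∈ 𝓑, ∃ F : Finset (Set X), ↑F ⊆ 𝓑 ∧
      (F : Set (Set X)).Pairwise Disjoint ∧ B₁ \ B₂ = ⋃₀ ↑F) :
    ∀ U : Set X, IsCompact U → IsOpen U →
      ∃ F : Finset (Set X), ↑F ⊆ 𝓑 ∧ (F : Set (Set X)).Pairwise Disjoint ∧ U = ⋃₀ ↑F :=
  compact_open_eq_finite_disjoint_union_of_basis_general 𝓑 hbasis hdiff
end

section
/- Fix n ≥ 1 and let M_n := (ℕ →₀ ℤ) × (Fin n → ℕ) × (Fin n → ℕ) with product (d,k,l)·(d',k',l') := (d + d', fun j ↦ k j + (k' j ∸ l j), fun j ↦ l' j + (l j ∸ k' j)) (∸ denoting truncated subtraction on ℕ) and star (d,k,l)^* := (−d, l, k). Then: (i) the product is associative; (ii) ((d,k,l)·(d',k',l'))^* = (d',k',l')^* · (d,k,l)^*; (iii) m · m^* · m = m for every m ∈ M_n; and (iv) any two idempotents of M_n commute. Consequently M_n is an inverse semigroup with m^* the generalized inverse of m. -/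
/-- The carrier of the monomial semigroup `M_n` at a free prime with `n` loops:
an element `(d, k, l)` encodes `(∏ᵢ tᵢ^{dᵢ}) ∏_{j=1}^{n} αⱼ^{kⱼ} (αⱼ*)^{lⱼ}`. -/
abbrev FreeMonomial (n : ℕ) : Type := (ℕ →₀ ℤ) × (Fin n → ℕ) × (Fin n → ℕ)

/-- The product on `M_n`:
`(d,k,l)·(d',k',l') = (d + d', fun j ↦ k j + (k' j ∸ l j), fun j ↦ l' j + (l j ∸ k' j))`
(`∸` is truncated subtraction on `ℕ`). -/
noncomputable def FreeMonomial.mul {n : ℕ} (x y : FreeMonomial n) : FreeMonomial n :=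
  (x.1 + y.1, fun j => x.2.1 j + (y.2.1 j - x.2.2 j), fun j => y.2.2 j + (x.2.2 j - y.2.1 j))

/-- The star (involution) on `M_n`: `(d,k,l)* = (−d, l, k)`. -/
noncomputable def FreeMonomial.star {n : ℕ} (x : FreeMonomial n) : FreeMonomial n :=
  (-x.1, x.2.2, x.2.1)

/-- For `n ≥ 1`, the product on `M_n` is associative, star is an
anti-homomorphism, `m · m* · m = m` for every `m`, and any two idempotents commute.
Consequently `M_n` is an inverse semigroup with `m*` the (unique) generalized inverse
of `m`. -/
theorem FreeMonomial.inverseSemigroup (n : ℕ) (hn : 1 ≤ n) :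
    (∀ a b c : FreeMonomial n, mul (mul a b) c = mul a (mul b c)) ∧
    (∀ a b : FreeMonomial n, star (mul a b) = mul (star b) (star a)) ∧
    (∀ m : FreeMonomial n, mul (mul m (star m)) m = m) ∧
    (∀ e f : FreeMonomial n, mul e e = e → mul f f = f → mul e f = mul f e) ∧
    (∀ m : FreeMonomial n,
      (mul (mul m (star m)) m = m ∧ mul (mul (star m) m) (star m) = star m) ∧
      ∀ m' : FreeMonomial n, mul (mul m m') m = m → mul (mul m' m) m' = m' → m' = star m) := by

  have mmsm : ∀ m : FreeMonomial n, mul (mul m (star m)) m = m := by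
    intro m
    refine Prod.ext (by show m.1 + -m.1 + m.1 = m.1; abel)
      (Prod.ext (funext fun j => ?_) (funext fun j => ?_)) <;> simp only [mul, star] <;> omega
  refine ⟨?_, ?_, mmsm, ?_, ?_⟩
  · intro a b c
    simp only [mul, Prod.mk.injEq]
    exact ⟨add_assoc _ _ _, funext fun j => by omega, funext fun j => by omega⟩
  · intro a b
    refine Prod.ext (by show -(a.1 + b.1) = -b.1 + -a.1; abel) (Prod.ext rfl rfl)
  · intro e f he hf
    have he1 : e.1 + e.1 = e.1 := congrArg Prod.fst he
    have hf1 : f.1 + f.1 = f.1 := congrArg Prod.fst hf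
    have hek := congrArg (fun x : FreeMonomial n => x.2.1) he
    have hel := congrArg (fun x : FreeMonomial n => x.2.2) he
    have hfk := congrArg (fun x : FreeMonomial n => x.2.1) hf
    have hfl := congrArg (fun x : FreeMonomial n => x.2.2) hf
    simp only [mul] at hek hel hfk hfl
    simp only [mul, Prod.mk.injEq]
    refine ⟨add_comm _ _, funext fun j => ?_, funext fun j => ?_⟩
    · have h1 := congrFun hek j; have h2 := congrFun hel j
      have h3 := congrFun hfk j; have h4 := congrFun hfl j
      omega
    · have h1 := congrFun hek j; have h2 := congrFun hel j
      have h3 := congrFun hfk j; have h4 := congrFun hfl j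
      omega
  · intro m
    refine ⟨⟨mmsm m, ?_⟩, ?_⟩
    · refine Prod.ext (by show -m.1 + m.1 + -m.1 = -m.1; abel)
        (Prod.ext (funext fun j => ?_) (funext fun j => ?_)) <;> simp only [mul, star] <;> omega
    · intro m' h1 h2
      have hd : m.1 + m'.1 + m.1 = m.1 := congrArg Prod.fst h1
      have hd' : m'.1 = -m.1 := by
        have h0 : m'.1 + m.1 = 0 := by
          have := add_left_cancel (a := m.1) (b := m'.1 + m.1) (c := 0)
            (by rw [add_zero, ← add_assoc]; exact hd)
          exact this
        exact eq_neg_of_add_eq_zero_left h0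
      have h1k := congrArg (fun x : FreeMonomial n => x.2.1) h1
      have h1l := congrArg (fun x : FreeMonomial n => x.2.2) h1
      have h2k := congrArg (fun x : FreeMonomial n => x.2.1) h2
      have h2l := congrArg (fun x : FreeMonomial n => x.2.2) h2
      simp only [mul] at h1k h1l h2k h2l
      refine Prod.ext hd' (Prod.ext (funext fun j => ?_) (funext fun j => ?_))
      · have a1 := congrFun h1k j; have a2 := congrFun h1l j
        have a3 := congrFun h2k j; have a4 := congrFun h2l j
        simp only [star]
        omega
      · have a1 := congrFun h1k j; have a2 := congrFun h1l j
        have a3 := congrFun h2k j; have a4 := congrFun h2l j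
        simp only [star]
        omega
end

section
/- Fix n ≥ 1 and consider the semigroup M_n. Then: (i) the idempotents of M_n are exactly the elements (0,k,k) with k : Fin n → ℕ; (ii) (0,k,k)·(0,l,l) = (0, max(k,l), max(k,l)), where max is taken componentwise; (iii) with respect to the natural order e ≤ f ⟺ ef = e, one has (0,k,k) ≤ (0,l,l) if and only if l j ≤ k j for all j; and (iv) the element (0, min(k,l), min(k,l)) (componentwise min) is the least upper bound of (0,k,k) and (0,l,l) in the set of idempotents of M_n. -/
/-- The natural partial order on idempotents: `e ≤ f ↔ e·f = e`. -/
noncomputable def FreeMonomial.le {n : ℕ} (e f : FreeMonomial n) : Prop :=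
  FreeMonomial.mul e f = e

lemma FreeMonomial.idem_iff {n : ℕ} (x : FreeMonomial n) :
    FreeMonomial.mul x x = x ↔ ∃ k : Fin n → ℕ, x = ((0 : ℕ →₀ ℤ), k, k) := by
  obtain ⟨d, k, l⟩ := x
  simp only [FreeMonomial.mul, Prod.mk.injEq, Prod.ext_iff]
  constructor
  · rintro ⟨hd, hk, hl⟩
    have hd0 : d = 0 := by
      have : d + d = d := hd
      simpa using congrArg (· - d) this
    have hkl : k = l := by
      funext j
      have h1 := congrFun hk j
      have h2 := congrFun hl j
      omega
    exact ⟨k, by simp [hd0, hkl]⟩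
  · rintro ⟨m, h1, h2, h3⟩
    subst h1
    refine ⟨by simp, ?_, ?_⟩ <;> funext j <;>
      [have := congrFun h2 j; have := congrFun h3 j] <;> simp_all <;> omega

lemma FreeMonomial.mul_idem {n : ℕ} (k l : Fin n → ℕ) :
    FreeMonomial.mul ((0 : ℕ →₀ ℤ), k, k) ((0 : ℕ →₀ ℤ), l, l) =
      ((0 : ℕ →₀ ℤ), (fun j => max (k j) (l j)), (fun j => max (k j) (l j))) := by
  simp only [FreeMonomial.mul, Prod.mk.injEq]
  refine ⟨by simp, ?_, ?_⟩ <;> funext j <;> omega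

lemma FreeMonomial.le_iff {n : ℕ} (k l : Fin n → ℕ) :
    FreeMonomial.le ((0 : ℕ →₀ ℤ), k, k) ((0 : ℕ →₀ ℤ), l, l) ↔ ∀ j, l j ≤ k j := by
  rw [FreeMonomial.le, FreeMonomial.mul_idem]
  simp only [Prod.mk.injEq]
  constructor
  · rintro ⟨-, h, -⟩ j
    have := congrFun h j
    simp only [max_eq_left_iff] at this
    omega
  · intro h
    refine ⟨by trivial, ?_, ?_⟩ <;> funext j <;> exact max_eq_left (h j)

/-- For `n ≥ 1`: (i) the idempotents of `M_n` are exactly the elements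
`(0,k,k)`; (ii) `(0,k,k)·(0,l,l) = (0, max(k,l), max(k,l))` componentwise; (iii) with respect
to the natural order `e ≤ f ⟺ ef = e`, `(0,k,k) ≤ (0,l,l)` iff `l j ≤ k j` for all `j`;
(iv) `(0, min(k,l), min(k,l))` is the least upper bound of `(0,k,k)` and `(0,l,l)`
among the idempotents of `M_n`. -/
theorem FreeMonomial.idempotents (n : ℕ) (hn : 1 ≤ n) :
    (∀ x : FreeMonomial n, FreeMonomial.mul x x = x ↔
      ∃ k : Fin n → ℕ, x = ((0 : ℕ →₀ ℤ), k, k)) ∧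
    (∀ k l : Fin n → ℕ,
      FreeMonomial.mul ((0 : ℕ →₀ ℤ), k, k) ((0 : ℕ →₀ ℤ), l, l) =
        ((0 : ℕ →₀ ℤ), (fun j => max (k j) (l j)), (fun j => max (k j) (l j)))) ∧
    (∀ k l : Fin n → ℕ,
      FreeMonomial.le ((0 : ℕ →₀ ℤ), k, k) ((0 : ℕ →₀ ℤ), l, l) ↔ ∀ j, l j ≤ k j) ∧
    (∀ k l : Fin n → ℕ,
      FreeMonomial.le ((0 : ℕ →₀ ℤ), k, k)
          ((0 : ℕ →₀ ℤ), (fun j => min (k j) (l j)), (fun j => min (k j) (l j))) ∧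
      FreeMonomial.le ((0 : ℕ →₀ ℤ), l, l)
          ((0 : ℕ →₀ ℤ), (fun j => min (k j) (l j)), (fun j => min (k j) (l j))) ∧
      ∀ m : FreeMonomial n, FreeMonomial.mul m m = m →
        FreeMonomial.le ((0 : ℕ →₀ ℤ), k, k) m →
        FreeMonomial.le ((0 : ℕ →₀ ℤ), l, l) m →
        FreeMonomial.le
          ((0 : ℕ →₀ ℤ), (fun j => min (k j) (l j)), (fun j => min (k j) (l j))) m) := by
  refine ⟨FreeMonomial.idem_iff, FreeMonomial.mul_idem, FreeMonomial.le_iff, ?_⟩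
  intro k l
  refine ⟨(FreeMonomial.le_iff _ _).2 fun j => min_le_left _ _,
    (FreeMonomial.le_iff _ _).2 fun j => min_le_right _ _, ?_⟩
  intro m hm hk hl
  obtain ⟨p, rfl⟩ := (FreeMonomial.idem_iff m).1 hm
  rw [FreeMonomial.le_iff] at hk hl ⊢
  exact fun j => le_min (hk j) (hl j)
end

section
/- For any adaptable separated graph (E,C), the semigroup S(E,C) is an inverse semigroup: any two idempotents of S(E,C) commute, every s ∈ S(E,C) satisfies s s^* s = s and s^* s s^* = s^*, and s^* is the unique element with these two properties. -/
/-! ## Adaptable separated graphs -/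

/-- An **adaptable separated graph** `(E,C)`.  The data consists of a directed graph
(`V`, `E`, `src`, `rng`), a separation `C` assigning to each vertex a partition of the
(finite, nonempty) sets of edges it emits, together with the finite poset `I` of transitive
components (the antisymmetrization of the path-way preorder), a partition of `I` into free
and regular primes, and for each free prime `p` the distinguished vertex `fv p`, the loops
`α p i` (`i < k p`) and the connectors `β p i t` (`t < g p i`), subject to the axioms of
[Definition 1.4 of the paper]. -/
structure ASG where
  V : Type
  E : Type
  decV : DecidableEq V
  decE : DecidableEq E
  src : E → V
  rng : E → V
  /-- the members of the partition at each vertex -/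
  C : V → Set (Finset E)
  C_src : ∀ v : V, ∀ X ∈ C v, ∀ e ∈ X, src e = v
  C_nonempty : ∀ v : V, ∀ X ∈ C v, X.Nonempty
  C_cover : ∀ e : E, ∃ X ∈ C (src e), e ∈ X
  C_disj : ∀ v : V, ∀ X ∈ C v, ∀ Y ∈ C v, X ≠ Y → ∀ e ∈ X, e ∉ Y
  /-- the finite poset of transitive components -/
  I : Type
  Ifin : Finite I
  Iord : PartialOrder I
  /-- the component of a vertex -/
  π : V → I
  π_surj : Function.Surjective π
  /-- `(I, ≤)` is the antisymmetrization of the path-way preorder: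
  `π v ≤ π w` iff there is a directed path from `w` to `v`. -/
  π_spec : ∀ v w : V, Iord.le (π v) (π w) ↔
    Relation.ReflTransGen (fun a b => ∃ e : E, src e = a ∧ rng e = b) w v
  /-- the free primes; the regular primes are the complement -/
  free : I → Prop
  /-- the single vertex of each free component (junk value at regular primes) -/
  fv : I → V
  fv_spec : ∀ p : I, free p → ∀ v : V, π v = p ↔ v = fv p
  /-- the number of loops at each free prime (junk value at regular primes) -/
  k : I → ℕ
  /-- the loops at each free prime (junk value at regular primes) -/
  α : ∀ p : I, Fin (k p) → E
  /-- the number of connectors attached to each loop -/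
  g : ∀ p : I, Fin (k p) → ℕ
  /-- the connectors at each free prime -/
  β : ∀ (p : I) (i : Fin (k p)), Fin (g p i) → E
  gpos : ∀ p : I, free p → ∀ i, 1 ≤ g p i
  α_src : ∀ p : I, free p → ∀ i, src (α p i) = fv p
  α_rng : ∀ p : I, free p → ∀ i, rng (α p i) = fv p
  β_src : ∀ p : I, free p → ∀ i t, src (β p i t) = fv p
  β_down : ∀ p : I, free p → ∀ i t, Iord.lt (π (rng (β p i t))) p
  /-- description of the partition at a free vertex: the sets
  `X_i = {α(p,i), β(p,i,1), …, β(p,i,g(p,i))}` -/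
  X_def : ∀ p : I, free p → ∀ X : Finset E, X ∈ C (fv p) ↔
    ∃ i : Fin (k p), X = insert (α p i) (Finset.image (β p i) Finset.univ)
  α_inj : ∀ p : I, free p → Function.Injective (α p)
  β_inj : ∀ p : I, free p →
    Function.Injective (fun x : Σ i : Fin (k p), Fin (g p i) => β p x.1 x.2)
  α_ne_β : ∀ p : I, free p → ∀ i j t, α p i ≠ β p j t
  /-- a free vertex is a sink iff its prime is minimal -/
  free_min : ∀ p : I, free p →
    ((¬ ∃ e : E, src e = fv p) ↔ ∀ q : I, Iord.le q p → Iord.le p q)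
  /-- the edges of the subgraph `E_p`, `p` free, are exactly the loops -/
  free_edges : ∀ p : I, free p → ∀ e : E, src e = fv p → π (rng e) = p → ∃ i, e = α p i
  /-- at a regular vertex the partition is trivial: `|C_v| = 1` -/
  reg_C_unique : ∀ v : V, ¬ free (π v) → ∀ X ∈ C v, ∀ Y ∈ C v, X = Y
  /-- every vertex of a regular component emits at least two edges inside its component -/
  reg_two : ∀ v : V, ¬ free (π v) → ∃ e f : E, e ≠ f ∧ src e = v ∧ src f = v ∧
    π (rng e) = π v ∧ π (rng f) = π v
  /-- regular components are transitive -/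
  reg_trans : ∀ v w : V, ¬ free (π v) → π v = π w →
    Relation.ReflTransGen (fun a b => ∃ e : E, src e = a ∧ rng e = b ∧ π (rng e) = π v) v w

attribute [instance] ASG.decV ASG.decE ASG.Ifin ASG.Iord

/-! ## The inverse semigroup `S(E,C)` -/

/-- Generators of the `*`-semigroup `S(E,C)`: vertices, edges, formal adjoints of edges,
and the auxiliary variables `t_i^v` and their inverses. -/
inductive ASG.Gen (G : ASG) : Type
  | vert : G.V → ASG.Gen G
  | edge : G.E → ASG.Gen G
  | edgeS : G.E → ASG.Gen G
  | t : G.V → ℕ → ASG.Gen G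
  | tI : G.V → ℕ → ASG.Gen G

/-- The star operation on generators. -/
def ASG.Gen.star {G : ASG} : ASG.Gen G → ASG.Gen G
  | .vert v => .vert v
  | .edge e => .edgeS e
  | .edgeS e => .edge e
  | .t v i => .tI v i
  | .tI v i => .t v i

/-- The free `*`-semigroup with zero on the generators. -/
abbrev ASG.PreS (G : ASG) : Type := WithZero (FreeSemigroup (ASG.Gen G))

/-- A single generator, as an element of the free `*`-semigroup with zero. -/
def ASG.ofg {G : ASG} (g : ASG.Gen G) : ASG.PreS G :=
  ((FreeSemigroup.of g : FreeSemigroup (ASG.Gen G)) : ASG.PreS G)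

/-- The star operation on the free semigroup (reverse the word, star each letter). -/
def ASG.wstar {G : ASG} (x : FreeSemigroup (ASG.Gen G)) : FreeSemigroup (ASG.Gen G) :=
  (FreeSemigroup.lift (fun g => MulOpposite.op (FreeSemigroup.of (ASG.Gen.star g))) x).unop

/-- The star operation on the free `*`-semigroup with zero. -/
def ASG.sstar {G : ASG} : ASG.PreS G → ASG.PreS G :=
  Option.map ASG.wstar

/-- the value of `σ^p_j(i)` (0-indexed): the unique increasing bijection
`{0,…,k-1} ∖ {j} → {0,…,k-2}` -/
def ASG.sig (j i : ℕ) : ℕ := if i < j then i else i - 1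

open ASG in
/-- The defining relations of `S(E,C)` (all the purely multiplicative relations of
(2.1) in the paper, i.e. all relations except `(ii)(d)` and `(1)(ii)`). -/
inductive ASG.RB (G : ASG) : ASG.PreS G → ASG.PreS G → Prop
  | vv (v : G.V) : RB G (ofg (.vert v) * ofg (.vert v)) (ofg (.vert v))
  | vw (v w : G.V) (h : v ≠ w) : RB G (ofg (.vert v) * ofg (.vert w)) 0
  | se (e : G.E) : RB G (ofg (.vert (G.src e)) * ofg (.edge e)) (ofg (.edge e))
  | er (e : G.E) : RB G (ofg (.edge e) * ofg (.vert (G.rng e))) (ofg (.edge e))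
  | ee (e : G.E) : RB G (ofg (.edgeS e) * ofg (.edge e)) (ofg (.vert (G.rng e)))
  | ef (e f : G.E) (X : Finset G.E) (hX : X ∈ G.C (G.src e)) (he : e ∈ X) (hf : f ∈ X)
      (hef : e ≠ f) : RB G (ofg (.edgeS e) * ofg (.edge f)) 0
  | acomm (p : G.I) (hp : G.free p) (i j : Fin (G.k p)) (hij : i ≠ j) :
      RB G (ofg (.edge (G.α p i)) * ofg (.edge (G.α p j)))
           (ofg (.edge (G.α p j)) * ofg (.edge (G.α p i)))
  | acommS (p : G.I) (hp : G.free p) (i j : Fin (G.k p)) (hij : i ≠ j) :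
      RB G (ofg (.edge (G.α p i)) * ofg (.edgeS (G.α p j)))
           (ofg (.edgeS (G.α p j)) * ofg (.edge (G.α p i)))
  | bb (p : G.I) (hp : G.free p) (i j : Fin (G.k p)) (hij : i ≠ j)
      (s : Fin (G.g p i)) (t : Fin (G.g p j)) :
      RB G (ofg (.edgeS (G.β p i s)) * ofg (.edge (G.β p j t))) 0
  | tcomm (v : G.V) (i j : ℕ) :
      RB G (ofg (.t v i) * ofg (.t v j)) (ofg (.t v j) * ofg (.t v i))
  | ttIcomm (v : G.V) (i j : ℕ) :
      RB G (ofg (.t v i) * ofg (.tI v j)) (ofg (.tI v j) * ofg (.t v i))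
  | vt (v : G.V) (i : ℕ) : RB G (ofg (.vert v) * ofg (.t v i)) (ofg (.t v i))
  | tv (v : G.V) (i : ℕ) : RB G (ofg (.t v i) * ofg (.vert v)) (ofg (.t v i))
  | ttI (v : G.V) (i : ℕ) : RB G (ofg (.t v i) * ofg (.tI v i)) (ofg (.vert v))
  | tIt (v : G.V) (i : ℕ) : RB G (ofg (.tI v i) * ofg (.t v i)) (ofg (.vert v))
  | treg (e : G.E) (h : ¬ G.free (G.π (G.src e))) (i : ℕ) :
      RB G (ofg (.t (G.src e) i) * ofg (.edge e)) (ofg (.edge e) * ofg (.t (G.rng e) i))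
  | tIreg (e : G.E) (h : ¬ G.free (G.π (G.src e))) (i : ℕ) :
      RB G (ofg (.tI (G.src e) i) * ofg (.edge e)) (ofg (.edge e) * ofg (.tI (G.rng e) i))
  | tb (p : G.I) (hp : G.free p) (i : ℕ) (j : Fin (G.k p)) (s : Fin (G.g p j)) :
      RB G (ofg (.t (G.fv p) i) * ofg (.edge (G.β p j s)))
           (ofg (.edge (G.β p j s)) * ofg (.t (G.rng (G.β p j s)) (i + G.k p - 1)))
  | tIb (p : G.I) (hp : G.free p) (i : ℕ) (j : Fin (G.k p)) (s : Fin (G.g p j)) :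
      RB G (ofg (.tI (G.fv p) i) * ofg (.edge (G.β p j s)))
           (ofg (.edge (G.β p j s)) * ofg (.tI (G.rng (G.β p j s)) (i + G.k p - 1)))
  | ab (p : G.I) (hp : G.free p) (i j : Fin (G.k p)) (hij : i ≠ j) (s : Fin (G.g p j)) :
      RB G (ofg (.edge (G.α p i)) * ofg (.edge (G.β p j s)))
           (ofg (.edge (G.β p j s)) * ofg (.t (G.rng (G.β p j s)) (sig (j : ℕ) (i : ℕ))))
  | aSb (p : G.I) (hp : G.free p) (i j : Fin (G.k p)) (hij : i ≠ j) (s : Fin (G.g p j)) :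
      RB G (ofg (.edgeS (G.α p i)) * ofg (.edge (G.β p j s)))
           (ofg (.edge (G.β p j s)) * ofg (.tI (G.rng (G.β p j s)) (sig (j : ℕ) (i : ℕ))))
  | ta (p : G.I) (hp : G.free p) (i : ℕ) (j : Fin (G.k p)) :
      RB G (ofg (.t (G.fv p) i) * ofg (.edge (G.α p j)))
           (ofg (.edge (G.α p j)) * ofg (.t (G.fv p) i))
  | taS (p : G.I) (hp : G.free p) (i : ℕ) (j : Fin (G.k p)) :
      RB G (ofg (.t (G.fv p) i) * ofg (.edgeS (G.α p j)))
           (ofg (.edgeS (G.α p j)) * ofg (.t (G.fv p) i))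

/-- The `*`-semigroup congruence generated by the defining relations. -/
inductive ASG.SR (G : ASG) : ASG.PreS G → ASG.PreS G → Prop
  | of {x y : ASG.PreS G} : ASG.RB G x y → ASG.SR G x y
  | refl (x : ASG.PreS G) : ASG.SR G x x
  | symm {x y : ASG.PreS G} : ASG.SR G x y → ASG.SR G y x
  | trans {x y z : ASG.PreS G} : ASG.SR G x y → ASG.SR G y z → ASG.SR G x z
  | mul_left {x y : ASG.PreS G} (a : ASG.PreS G) : ASG.SR G x y → ASG.SR G (a * x) (a * y)
  | mul_right {x y : ASG.PreS G} (a : ASG.PreS G) : ASG.SR G x y → ASG.SR G (x * a) (y * a)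
  | star {x y : ASG.PreS G} : ASG.SR G x y → ASG.SR G (ASG.sstar x) (ASG.sstar y)

/-- The setoid on the free `*`-semigroup with zero given by the congruence. -/
def ASG.secSetoid (G : ASG) : Setoid (ASG.PreS G) :=
  ⟨ASG.SR G, ⟨ASG.SR.refl, ASG.SR.symm, ASG.SR.trans⟩⟩

/-- The inverse semigroup `S(E,C)` associated to an adaptable separated graph, defined by
the generators and the relations of (2.1) in the paper (excluding `(ii)(d)` and `(1)(ii)`). -/
def ASG.SEC (G : ASG) : Type := Quotient (ASG.secSetoid G)

instance (G : ASG) : Mul (ASG.SEC G) :=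
  ⟨Quotient.map₂ (· * ·) (fun _ b hab c _ hcd =>
    ASG.SR.trans (ASG.SR.mul_right c hab) (ASG.SR.mul_left b hcd))⟩

instance (G : ASG) : Zero (ASG.SEC G) := ⟨Quotient.mk (ASG.secSetoid G) 0⟩

instance (G : ASG) : Star (ASG.SEC G) :=
  ⟨Quotient.map ASG.sstar (fun _ _ h => ASG.SR.star h)⟩

instance (G : ASG) : Semigroup (ASG.SEC G) where
  mul_assoc a b c := by
    induction a using Quotient.ind
    induction b using Quotient.ind
    induction c using Quotient.ind
    exact congrArg (Quotient.mk _) (mul_assoc _ _ _)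

/-- The class of a word of generators in `S(E,C)`; the empty word is sent to `0`
(it never occurs for the words we use). -/
def ASG.mkS (G : ASG) : List (ASG.Gen G) → ASG.SEC G
  | [] => 0
  | (g :: rest) => Quotient.mk (ASG.secSetoid G)
      (rest.foldl (fun acc h => acc * ASG.ofg h) (ASG.ofg g))

/-- idempotents of `S(E,C)` -/
def ASG.IsIdem {G : ASG} (x : ASG.SEC G) : Prop := x * x = x
namespace ASG

variable {G : ASG}

/-! ### Infrastructure -/

abbrev mkq (x : ASG.PreS G) : ASG.SEC G := Quotient.mk (ASG.secSetoid G) x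

lemma mkq_mul (a b : ASG.PreS G) : mkq a * mkq b = mkq (a * b) := rfl

lemma rel {x y : ASG.PreS G} (h : ASG.RB G x y) : mkq x = mkq y :=
  Quotient.sound (ASG.SR.of h)

def el (g : ASG.Gen G) : ASG.SEC G := mkq (ASG.ofg g)

lemma el_mul (a b : ASG.Gen G) : el a * el b = mkq (ASG.ofg a * ASG.ofg b) := rfl

lemma zmul (x : ASG.SEC G) : (0 : ASG.SEC G) * x = 0 := by
  induction x using Quotient.ind
  exact congrArg (Quotient.mk _) (zero_mul _)

lemma mulz (x : ASG.SEC G) : x * (0 : ASG.SEC G) = 0 := by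
  induction x using Quotient.ind
  exact congrArg (Quotient.mk _) (mul_zero _)

lemma wstar_mul (x y : FreeSemigroup (ASG.Gen G)) :
    ASG.wstar (x * y) = ASG.wstar y * ASG.wstar x := by
  unfold ASG.wstar
  rw [map_mul]
  rfl

lemma wstar_of (g : ASG.Gen G) : ASG.wstar (FreeSemigroup.of g) = FreeSemigroup.of g.star := by
  unfold ASG.wstar
  rw [FreeSemigroup.lift_of]
  rfl

lemma gen_star_star (g : ASG.Gen G) : g.star.star = g := by cases g <;> rfl

lemma wstar_wstar (x : FreeSemigroup (ASG.Gen G)) : ASG.wstar (ASG.wstar x) = x := by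
  induction x using FreeSemigroup.recOnMul with
  | ih1 g => rw [wstar_of, wstar_of, gen_star_star]
  | ih2 a b ha hb => rw [wstar_mul, wstar_mul, ha, hb]

lemma sstar_mul (a b : ASG.PreS G) : ASG.sstar (a * b) = ASG.sstar b * ASG.sstar a := by
  cases a with
  | none =>
    show ASG.sstar (0 * b) = ASG.sstar b * ASG.sstar (0 : ASG.PreS G)
    rw [zero_mul]
    show (0 : ASG.PreS G) = ASG.sstar b * (0 : ASG.PreS G)
    rw [mul_zero]
  | some x =>
    cases b with
    | none =>
      show ASG.sstar ((x : ASG.PreS G) * 0) = ASG.sstar (0 : ASG.PreS G) * _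
      rw [mul_zero]
      show (0 : ASG.PreS G) = (0 : ASG.PreS G) * _
      rw [zero_mul]
    | some y =>
      show ASG.sstar ((x : ASG.PreS G) * (y : ASG.PreS G)) =
        ((ASG.wstar y : FreeSemigroup _) : ASG.PreS G) * ((ASG.wstar x : FreeSemigroup _) : ASG.PreS G)
      rw [← WithZero.coe_mul, ← WithZero.coe_mul]
      show ((ASG.wstar (x * y) : FreeSemigroup _) : ASG.PreS G) = _
      rw [wstar_mul]

lemma sstar_sstar (a : ASG.PreS G) : ASG.sstar (ASG.sstar a) = a := by
  cases a with
  | none => rfl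
  | some x => show Option.map _ _ = _; simp [ASG.sstar, wstar_wstar]

lemma star_mkq (a : ASG.PreS G) : star (mkq a) = mkq (ASG.sstar a) := rfl

lemma star_mul' (x y : ASG.SEC G) : star (x * y) = star y * star x := by
  induction x using Quotient.ind
  induction y using Quotient.ind
  exact congrArg (Quotient.mk _) (sstar_mul _ _)

lemma star_star' (x : ASG.SEC G) : star (star x) = x := by
  induction x using Quotient.ind
  exact congrArg (Quotient.mk _) (sstar_sstar _)

lemma star_zero' : star (0 : ASG.SEC G) = 0 := rfl

lemma star_el (g : ASG.Gen G) : star (el g) = el g.star := by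
  show mkq (ASG.sstar (ASG.ofg g)) = mkq (ASG.ofg g.star)
  have h : ASG.sstar (ASG.ofg g) = ASG.ofg g.star := by
    show ((ASG.wstar (FreeSemigroup.of g) : FreeSemigroup _) : ASG.PreS G) = _
    rw [wstar_of]
    rfl
  rw [h]

end ASG
namespace ASG

variable {G : ASG}

/-! ### Abbreviations for generators -/

def eV (v : G.V) : ASG.SEC G := el (.vert v)
def eE (e : G.E) : ASG.SEC G := el (.edge e)
def eS (e : G.E) : ASG.SEC G := el (.edgeS e)

def gGen (v : G.V) (τ : ℕ × Bool) : ASG.Gen G :=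
  if τ.2 then .tI v τ.1 else .t v τ.1

def gT (v : G.V) (τ : ℕ × Bool) : ASG.SEC G := el (gGen v τ)

def flipT (τ : ℕ × Bool) : ℕ × Bool := (τ.1, !τ.2)

lemma star_eV (v : G.V) : star (eV v) = eV v := star_el _
lemma star_eE (e : G.E) : star (eE e) = eS e := star_el _
lemma star_eS (e : G.E) : star (eS e) = eE e := star_el _
lemma star_gT (v : G.V) (τ : ℕ × Bool) : star (gT v τ) = gT v (flipT τ) := by
  cases τ with
  | mk i b => cases b <;> exact star_el _

/-! ### The defining relations at the level of `SEC` -/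

lemma r_vv (v : G.V) : eV v * eV v = eV v := rel (ASG.RB.vv v)

lemma r_vw {v w : G.V} (h : v ≠ w) : eV v * eV w = 0 := rel (ASG.RB.vw v w h)

lemma r_se (e : G.E) : eV (G.src e) * eE e = eE e := rel (ASG.RB.se e)

lemma r_er (e : G.E) : eE e * eV (G.rng e) = eE e := rel (ASG.RB.er e)

lemma r_ee (e : G.E) : eS e * eE e = eV (G.rng e) := rel (ASG.RB.ee e)

lemma r_ef {e f : G.E} (X : Finset G.E) (hX : X ∈ G.C (G.src e)) (he : e ∈ X)
    (hf : f ∈ X) (hef : e ≠ f) : eS e * eE f = 0 := rel (ASG.RB.ef e f X hX he hf hef)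

lemma r_acomm (p : G.I) (hp : G.free p) {i j : Fin (G.k p)} (hij : i ≠ j) :
    eE (G.α p i) * eE (G.α p j) = eE (G.α p j) * eE (G.α p i) :=
  rel (ASG.RB.acomm p hp i j hij)

lemma r_acommS (p : G.I) (hp : G.free p) {i j : Fin (G.k p)} (hij : i ≠ j) :
    eE (G.α p i) * eS (G.α p j) = eS (G.α p j) * eE (G.α p i) :=
  rel (ASG.RB.acommS p hp i j hij)

lemma r_bb (p : G.I) (hp : G.free p) {i j : Fin (G.k p)} (hij : i ≠ j)
    (s : Fin (G.g p i)) (t : Fin (G.g p j)) :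
    eS (G.β p i s) * eE (G.β p j t) = 0 := rel (ASG.RB.bb p hp i j hij s t)

lemma r_vt (v : G.V) (i : ℕ) : eV v * el (.t v i) = el (.t v i) := rel (ASG.RB.vt v i)

lemma r_tv (v : G.V) (i : ℕ) : el (.t v i) * eV v = el (.t v i) := rel (ASG.RB.tv v i)

lemma r_ttI (v : G.V) (i : ℕ) : el (.t v i) * el (.tI v i) = eV v := rel (ASG.RB.ttI v i)

lemma r_tIt (v : G.V) (i : ℕ) : el (.tI v i) * el (.t v i) = eV v := rel (ASG.RB.tIt v i)

lemma r_treg (e : G.E) (h : ¬ G.free (G.π (G.src e))) (i : ℕ) :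
    el (.t (G.src e) i) * eE e = eE e * el (.t (G.rng e) i) := rel (ASG.RB.treg e h i)

lemma r_tIreg (e : G.E) (h : ¬ G.free (G.π (G.src e))) (i : ℕ) :
    el (.tI (G.src e) i) * eE e = eE e * el (.tI (G.rng e) i) := rel (ASG.RB.tIreg e h i)

lemma r_tb (p : G.I) (hp : G.free p) (i : ℕ) (j : Fin (G.k p)) (s : Fin (G.g p j)) :
    el (.t (G.fv p) i) * eE (G.β p j s)
      = eE (G.β p j s) * el (.t (G.rng (G.β p j s)) (i + G.k p - 1)) :=
  rel (ASG.RB.tb p hp i j s)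

lemma r_tIb (p : G.I) (hp : G.free p) (i : ℕ) (j : Fin (G.k p)) (s : Fin (G.g p j)) :
    el (.tI (G.fv p) i) * eE (G.β p j s)
      = eE (G.β p j s) * el (.tI (G.rng (G.β p j s)) (i + G.k p - 1)) :=
  rel (ASG.RB.tIb p hp i j s)

lemma r_ab (p : G.I) (hp : G.free p) {i j : Fin (G.k p)} (hij : i ≠ j) (s : Fin (G.g p j)) :
    eE (G.α p i) * eE (G.β p j s)
      = eE (G.β p j s) * el (.t (G.rng (G.β p j s)) (ASG.sig (j : ℕ) (i : ℕ))) :=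
  rel (ASG.RB.ab p hp i j hij s)

lemma r_aSb (p : G.I) (hp : G.free p) {i j : Fin (G.k p)} (hij : i ≠ j) (s : Fin (G.g p j)) :
    eS (G.α p i) * eE (G.β p j s)
      = eE (G.β p j s) * el (.tI (G.rng (G.β p j s)) (ASG.sig (j : ℕ) (i : ℕ))) :=
  rel (ASG.RB.aSb p hp i j hij s)

lemma r_ta (p : G.I) (hp : G.free p) (i : ℕ) (j : Fin (G.k p)) :
    el (.t (G.fv p) i) * eE (G.α p j) = eE (G.α p j) * el (.t (G.fv p) i) :=
  rel (ASG.RB.ta p hp i j)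

lemma r_taS (p : G.I) (hp : G.free p) (i : ℕ) (j : Fin (G.k p)) :
    el (.t (G.fv p) i) * eS (G.α p j) = eS (G.α p j) * el (.t (G.fv p) i) :=
  rel (ASG.RB.taS p hp i j)

/-! ### Derived relations obtained by applying the star -/

private lemma star2 {a b c : ASG.SEC G} (h : a * b = c) :
    star b * star a = star c := by rw [← star_mul', h]

private lemma star3 {a b c d : ASG.SEC G} (h : a * b = c * d) :
    star b * star a = star d * star c := by rw [← star_mul', ← star_mul', h]

lemma d_ve (e : G.E) : eV (G.rng e) * eS e = eS e := by
  have := star2 (r_er e)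
  simpa only [star_eV, star_eE, star_eS, star_el, ASG.Gen.star] using this

lemma d_sv (e : G.E) : eS e * eV (G.src e) = eS e := by
  have := star2 (r_se e)
  simpa only [star_eV, star_eE, star_eS, star_el, ASG.Gen.star] using this

lemma d_vtI (v : G.V) (i : ℕ) : eV v * el (.tI v i) = el (.tI v i) := by
  have := star2 (r_tv v i)
  simpa only [star_eV, star_eE, star_eS, star_el, ASG.Gen.star] using this

lemma d_tIv (v : G.V) (i : ℕ) : el (.tI v i) * eV v = el (.tI v i) := by
  have := star2 (r_vt v i)
  simpa only [star_eV, star_eE, star_eS, star_el, ASG.Gen.star] using this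

lemma gT_v (v : G.V) (τ : ℕ × Bool) : gT v τ * eV v = gT v τ := by
  obtain ⟨i, b⟩ := τ
  cases b
  · exact r_tv v i
  · exact d_tIv v i

lemma v_gT (v : G.V) (τ : ℕ × Bool) : eV v * gT v τ = gT v τ := by
  obtain ⟨i, b⟩ := τ
  cases b
  · exact r_vt v i
  · exact d_vtI v i

lemma gT_flip (v : G.V) (τ : ℕ × Bool) : gT v τ * gT v (flipT τ) = eV v := by
  obtain ⟨i, b⟩ := τ
  cases b
  · exact r_ttI v i
  · exact r_tIt v i

lemma d_ss (p : G.I) (hp : G.free p) {i j : Fin (G.k p)} (hij : i ≠ j) :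
    eS (G.α p i) * eS (G.α p j) = eS (G.α p j) * eS (G.α p i) := by
  have := star3 (r_acomm p hp hij)
  simp only [star_eE] at this
  exact this.symm

lemma d_se_ae (p : G.I) (hp : G.free p) {i j : Fin (G.k p)} (hij : i ≠ j) :
    eS (G.α p i) * eE (G.α p j) = eE (G.α p j) * eS (G.α p i) :=
  (r_acommS p hp hij.symm).symm

-- star of r_ab : tI_σ β* = β* α_i*
lemma d_tIs (p : G.I) (hp : G.free p) {i j : Fin (G.k p)} (hij : i ≠ j) (s : Fin (G.g p j)) :
    el (.tI (G.rng (G.β p j s)) (ASG.sig (j : ℕ) (i : ℕ))) * eS (G.β p j s)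
      = eS (G.β p j s) * eS (G.α p i) := by
  have := star3 (r_ab p hp hij s)
  simp only [star_eE, star_eS, star_el, ASG.Gen.star] at this
  exact this.symm

-- star of r_aSb : β* α_i = t_σ β*
lemma d_sb_ae (p : G.I) (hp : G.free p) {i j : Fin (G.k p)} (hij : i ≠ j) (s : Fin (G.g p j)) :
    eS (G.β p j s) * eE (G.α p i)
      = el (.t (G.rng (G.β p j s)) (ASG.sig (j : ℕ) (i : ℕ))) * eS (G.β p j s) := by
  have := star3 (r_aSb p hp hij s)
  simpa only [star_eE, star_eS, star_el, ASG.Gen.star] using this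

end ASG
namespace ASG

variable {G : ASG}

/-! ### more derived push relations -/

private lemma starify {a b c d : ASG.SEC G} (h : a * b = c * d) :
    star b * star a = star d * star c := by rw [← star_mul', ← star_mul', h]

lemma d_tIa (p : G.I) (hp : G.free p) (i : ℕ) (j : Fin (G.k p)) :
    el (.tI (G.fv p) i) * eE (G.α p j) = eE (G.α p j) * el (.tI (G.fv p) i) := by
  have := starify (r_taS p hp i j)
  simp only [star_eE, star_eS, star_el, ASG.Gen.star] at this
  exact this.symm

lemma d_sa_t (p : G.I) (hp : G.free p) (i : ℕ) (j : Fin (G.k p)) :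
    eS (G.α p j) * el (.t (G.fv p) i) = el (.t (G.fv p) i) * eS (G.α p j) :=
  (r_taS p hp i j).symm

lemma d_sa_tI (p : G.I) (hp : G.free p) (i : ℕ) (j : Fin (G.k p)) :
    eS (G.α p j) * el (.tI (G.fv p) i) = el (.tI (G.fv p) i) * eS (G.α p j) := by
  have := starify (r_ta p hp i j)
  simpa only [star_eE, star_eS, star_el, ASG.Gen.star] using this

lemma d_sb_t (p : G.I) (hp : G.free p) (i : ℕ) (j : Fin (G.k p)) (s : Fin (G.g p j)) :
    eS (G.β p j s) * el (.t (G.fv p) i)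
      = el (.t (G.rng (G.β p j s)) (i + G.k p - 1)) * eS (G.β p j s) := by
  have := starify (r_tIb p hp i j s)
  simpa only [star_eE, star_eS, star_el, ASG.Gen.star] using this

lemma d_sb_tI (p : G.I) (hp : G.free p) (i : ℕ) (j : Fin (G.k p)) (s : Fin (G.g p j)) :
    eS (G.β p j s) * el (.tI (G.fv p) i)
      = el (.tI (G.rng (G.β p j s)) (i + G.k p - 1)) * eS (G.β p j s) := by
  have := starify (r_tb p hp i j s)
  simpa only [star_eE, star_eS, star_el, ASG.Gen.star] using this

lemma d_sreg_t (e : G.E) (h : ¬ G.free (G.π (G.src e))) (i : ℕ) :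
    eS e * el (.t (G.src e) i) = el (.t (G.rng e) i) * eS e := by
  have := starify (r_tIreg e h i)
  simpa only [star_eE, star_eS, star_el, ASG.Gen.star] using this

lemma d_sreg_tI (e : G.E) (h : ¬ G.free (G.π (G.src e))) (i : ℕ) :
    eS e * el (.tI (G.src e) i) = el (.tI (G.rng e) i) * eS e := by
  have := starify (r_treg e h i)
  simpa only [star_eE, star_eS, star_el, ASG.Gen.star] using this

/-! ### classification of edges -/

lemma pi_fv {p : G.I} (hp : G.free p) : G.π (G.fv p) = p := (G.fv_spec p hp (G.fv p)).mpr rfl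

lemma classify (e : G.E) (h : G.free (G.π (G.src e))) :
    G.src e = G.fv (G.π (G.src e)) ∧
    ((∃ i, e = G.α (G.π (G.src e)) i) ∨ ∃ i t, e = G.β (G.π (G.src e)) i t) := by
  have hs : G.src e = G.fv (G.π (G.src e)) := (G.fv_spec _ h _).mp rfl
  obtain ⟨X, hX, heX⟩ := G.C_cover e
  rw [hs] at hX
  obtain ⟨i, rfl⟩ := (G.X_def _ h X).mp hX
  rcases Finset.mem_insert.mp heX with h1 | h2
  · exact ⟨hs, .inl ⟨i, h1⟩⟩
  · obtain ⟨t, _, ht⟩ := Finset.mem_image.mp h2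
    exact ⟨hs, .inr ⟨i, t, ht.symm⟩⟩

lemma X_mem (p : G.I) (hp : G.free p) (i : Fin (G.k p)) :
    (insert (G.α p i) (Finset.image (G.β p i) Finset.univ)) ∈ G.C (G.fv p) :=
  (G.X_def p hp _).mpr ⟨i, rfl⟩

lemma mem_Xa (p : G.I) (i : Fin (G.k p)) :
    G.α p i ∈ insert (G.α p i) (Finset.image (G.β p i) Finset.univ) :=
  Finset.mem_insert_self _ _

lemma mem_Xb (p : G.I) (i : Fin (G.k p)) (t : Fin (G.g p i)) :
    G.β p i t ∈ insert (G.α p i) (Finset.image (G.β p i) Finset.univ) :=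
  Finset.mem_insert_of_mem (Finset.mem_image_of_mem _ (Finset.mem_univ t))

lemma zero_ef {e f : G.E} (X : Finset G.E) (v : G.V) (hX : X ∈ G.C v) (he : e ∈ X)
    (hf : f ∈ X) (hne : e ≠ f) : eS e * eE f = 0 := by
  have hs : G.src e = v := G.C_src v X hX e he
  exact r_ef X (by rwa [hs]) he hf hne

lemma zero_reg {e f : G.E} (h : ¬ G.free (G.π (G.src e))) (hsrc : G.src e = G.src f)
    (hne : e ≠ f) : eS e * eE f = 0 := by
  obtain ⟨X, hX, heX⟩ := G.C_cover e
  obtain ⟨Y, hY, hfY⟩ := G.C_cover f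
  rw [← hsrc] at hY
  have hXY := G.reg_C_unique _ h X hX Y hY
  exact zero_ef X (G.src e) hX heX (hXY ▸ hfY) hne

lemma zero_sv {e f : G.E} (h : G.src e ≠ G.src f) : eS e * eE f = 0 := by
  rw [← d_sv e, ← r_se f, mul_assoc, ← mul_assoc (eV (G.src e)), r_vw h, zmul, mulz]

/-- classification with an abstract prime -/
lemma classify' (e : G.E) (h : G.free (G.π (G.src e))) :
    ∃ p : G.I, G.free p ∧ G.π (G.src e) = p ∧ G.src e = G.fv p ∧
      ((∃ i, e = G.α p i) ∨ ∃ i t, e = G.β p i t) :=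
  ⟨_, h, rfl, (classify e h).1, (classify e h).2⟩

/-- master case lemma for a product `e* · f` with `e ≠ f`, same source. -/
lemma headCases (e f : G.E) (hsrc : G.src e = G.src f) (hne : e ≠ f) :
    eS e * eE f = 0 ∨
    ∃ (p : G.I) (hp : G.free p) (i j : Fin (G.k p)), i ≠ j ∧ G.src e = G.fv p ∧
      ((e = G.α p i ∨ ∃ s, e = G.β p i s) ∧ (f = G.α p j ∨ ∃ t, f = G.β p j t)) := by
  by_cases hfree : G.free (G.π (G.src e))
  · obtain ⟨p, hp, hpe, hs, he⟩ := classify' e hfree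
    have hfree' : G.free (G.π (G.src f)) := by rwa [← hsrc]
    obtain ⟨p', hp', hpf, hs', hf⟩ := classify' f hfree'
    have hpp : p = p' := by rw [← hpf, ← hsrc, hpe]
    subst hpp
    have hee : (∃ i, e = G.α p i) ∨ ∃ i s, e = G.β p i s := he
    have hff : (∃ j, f = G.α p j) ∨ ∃ j t, f = G.β p j t := hf
    clear he hf
    obtain ⟨i, hei⟩ | ⟨i, s, hei⟩ := hee <;> obtain ⟨j, hfj⟩ | ⟨j, t, hfj⟩ := hff <;>
    · by_cases hij : i = j
      · subst hij
        left
        refine zero_ef _ (G.fv p) (X_mem _ hp i) ?_ ?_ hne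
        · first
            | (rw [hei]; exact mem_Xa _ i)
            | (rw [hei]; exact mem_Xb _ i _)
        · first
            | (rw [hfj]; exact mem_Xa _ i)
            | (rw [hfj]; exact mem_Xb _ i _)
      · right
        refine ⟨p, hp, i, j, hij, hs, ?_, ?_⟩
        · first
            | exact .inl hei
            | exact .inr ⟨s, hei⟩
        · first
            | exact .inl hfj
            | exact .inr ⟨t, hfj⟩
  · exact .inl (zero_reg hfree hsrc hne)

end ASG
namespace ASG

variable {G : ASG}

lemma gT_def (v : G.V) (τ : ℕ × Bool) : gT v τ = el (gGen v τ) := rfl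

/-- Pushing a `t`-generator through an edge (direct and starred form). -/
lemma push (e : G.E) (τ : ℕ × Bool) : ∃ τ' : ℕ × Bool,
    gT (G.src e) τ * eE e = eE e * gT (G.rng e) τ' ∧
    eS e * gT (G.src e) τ = gT (G.rng e) τ' * eS e := by
  obtain ⟨i, b⟩ := τ
  by_cases hfree : G.free (G.π (G.src e))
  · obtain ⟨p, hp, hpe, hs, he⟩ := classify' e hfree
    rcases he with ⟨j, rfl⟩ | ⟨j, t, rfl⟩
    · refine ⟨(i, b), ?_, ?_⟩ <;> rw [hs, G.α_rng p hp j] <;> cases b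
      · exact r_ta p hp i j
      · exact d_tIa p hp i j
      · exact d_sa_t p hp i j
      · exact d_sa_tI p hp i j
    · refine ⟨(i + G.k p - 1, b), ?_, ?_⟩ <;> rw [hs] <;> cases b
      · exact r_tb p hp i j t
      · exact r_tIb p hp i j t
      · exact d_sb_t p hp i j t
      · exact d_sb_tI p hp i j t
  · refine ⟨(i, b), ?_, ?_⟩ <;> cases b
    · exact r_treg e hfree i
    · exact r_tIreg e hfree i
    · exact d_sreg_t e hfree i
    · exact d_sreg_tI e hfree i

/-! ### words -/

def mulW (l : List (ASG.Gen G)) (s : ASG.SEC G) : ASG.SEC G :=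
  l.foldr (fun g a => el g * a) s

def mulWr (s : ASG.SEC G) (l : List (ASG.Gen G)) : ASG.SEC G :=
  l.foldl (fun a g => a * el g) s

@[simp] lemma mulW_nil (s : ASG.SEC G) : mulW [] s = s := rfl

@[simp] lemma mulW_cons (g : ASG.Gen G) (l : List (ASG.Gen G)) (s : ASG.SEC G) :
    mulW (g :: l) s = el g * mulW l s := rfl

@[simp] lemma mulWr_nil (s : ASG.SEC G) : mulWr s [] = s := rfl

@[simp] lemma mulWr_cons (s : ASG.SEC G) (g : ASG.Gen G) (l : List (ASG.Gen G)) :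
    mulWr s (g :: l) = mulWr (s * el g) l := rfl

lemma mulW_mul (l : List (ASG.Gen G)) (a b : ASG.SEC G) :
    mulW l a * b = mulW l (a * b) := by
  induction l with
  | nil => rfl
  | cons g l ih => rw [mulW_cons, mulW_cons, mul_assoc, ih]

lemma mul_mulWr (a s : ASG.SEC G) (l : List (ASG.Gen G)) :
    a * mulWr s l = mulWr (a * s) l := by
  induction l generalizing s with
  | nil => rfl
  | cons g l ih => rw [mulWr_cons, mulWr_cons, ih, mul_assoc]

lemma mulWr_snoc (s : ASG.SEC G) (l : List (ASG.Gen G)) (g : ASG.Gen G) :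
    mulWr s (l ++ [g]) = mulWr s l * el g := by
  simp [mulWr, List.foldl_append]

lemma mulW_append (l m : List (ASG.Gen G)) (s : ASG.SEC G) :
    mulW (l ++ m) s = mulW l (mulW m s) := by
  simp [mulW, List.foldr_append]

lemma mulW_mulWr (l : List (ASG.Gen G)) (s : ASG.SEC G) (m : List (ASG.Gen G)) :
    mulW l (mulWr s m) = mulWr (mulW l s) m := by
  induction l with
  | nil => rfl
  | cons g l ih => rw [mulW_cons, mulW_cons, ih, mul_mulWr]

def starL (l : List (ASG.Gen G)) : List (ASG.Gen G) := (l.map ASG.Gen.star).reverse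

@[simp] lemma starL_nil : starL ([] : List (ASG.Gen G)) = [] := rfl

lemma starL_cons (g : ASG.Gen G) (l : List (ASG.Gen G)) :
    starL (g :: l) = starL l ++ [g.star] := by simp [starL]

lemma star_mulW (l : List (ASG.Gen G)) (s : ASG.SEC G) :
    star (mulW l s) = mulWr (star s) (starL l) := by
  induction l with
  | nil => rfl
  | cons g l ih =>
    rw [mulW_cons, star_mul', star_el, ih, starL_cons, mulWr_snoc]

lemma star_mulWr (s : ASG.SEC G) (l : List (ASG.Gen G)) :
    star (mulWr s l) = mulW (starL l) (star s) := by
  induction l generalizing s with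
  | nil => rfl
  | cons g l ih =>
    rw [mulWr_cons, ih, starL_cons, mulW_append, mulW_cons, mulW_nil, star_mul', star_el]

/-! ### paths -/

def srcP : List G.E → G.V → G.V
  | [], x => x
  | e :: _, _ => G.src e

@[simp] lemma srcP_nil (x : G.V) : srcP ([] : List G.E) x = x := rfl

@[simp] lemma srcP_cons (e : G.E) (D : List G.E) (x : G.V) :
    srcP (e :: D) x = G.src e := rfl

def PathTo : List G.E → G.V → Prop
  | [], _ => True
  | e :: D, x => srcP D x = G.rng e ∧ PathTo D x

@[simp] lemma pathTo_nil (x : G.V) : PathTo ([] : List G.E) x := trivial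

lemma pathTo_cons {e : G.E} {D : List G.E} {x : G.V} :
    PathTo (e :: D) x ↔ srcP D x = G.rng e ∧ PathTo D x := Iff.rfl

lemma srcP_snoc (D : List G.E) (f : G.E) (y : G.V) :
    srcP (D ++ [f]) y = srcP D (G.src f) := by cases D <;> rfl

lemma pathTo_snoc {D : List G.E} {x : G.V} (h : PathTo D x) {f : G.E} (hf : G.src f = x) :
    PathTo (D ++ [f]) (G.rng f) := by
  induction D with
  | nil => exact ⟨rfl, trivial⟩
  | cons e D ih =>
    obtain ⟨h1, h2⟩ := h
    refine ⟨?_, ih h2⟩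
    show srcP (D ++ [f]) (G.rng f) = G.rng e
    rw [srcP_snoc]
    cases D with
    | nil => show G.src f = G.rng e; rw [hf]; exact h1
    | cons g D' => exact h1

/-! ### shapes and projection forms -/

def starE (D : List G.E) : List (ASG.Gen G) := (D.map ASG.Gen.edgeS).reverse

@[simp] lemma starE_nil : starE ([] : List G.E) = [] := rfl

lemma starE_cons (e : G.E) (D : List G.E) :
    starE (e :: D) = starE D ++ [ASG.Gen.edgeS e] := by simp [starE]

lemma starE_snoc (D : List G.E) (f : G.E) :
    starE (D ++ [f]) = ASG.Gen.edgeS f :: starE D := by simp [starE]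

def SH (v : G.V) (P : List G.E) (T : List (ℕ × Bool)) (Q : List G.E) : ASG.SEC G :=
  mulW (P.map .edge) (mulW (T.map (gGen v)) (mulWr (eV v) (starE Q)))

def DF (x : G.V) (D : List G.E) : ASG.SEC G := SH x D [] D

lemma SH_consP (v : G.V) (e : G.E) (P : List G.E) (T : List (ℕ × Bool)) (Q : List G.E) :
    SH v (e :: P) T Q = eE e * SH v P T Q := rfl

lemma SH_consT (v : G.V) (τ : ℕ × Bool) (T : List (ℕ × Bool)) (Q : List G.E) :
    SH v [] (τ :: T) Q = gT v τ * SH v [] T Q := rfl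

lemma SH_nil (v : G.V) (Q : List G.E) : SH v [] [] Q = mulWr (eV v) (starE Q) := rfl

lemma DF_nil (x : G.V) : DF x [] = eV x := rfl

lemma v_abs_T (v : G.V) (T : List (ℕ × Bool)) (s : ASG.SEC G) (hs : eV v * s = s) :
    eV v * mulW (T.map (gGen v)) s = mulW (T.map (gGen v)) s := by
  cases T with
  | nil => simpa using hs
  | cons τ T =>
    rw [List.map_cons, mulW_cons, ← mul_assoc, ← gT_def, v_gT, gT_def]

lemma abs_SH (v : G.V) (P : List G.E) (T : List (ℕ × Bool)) (Q : List G.E) :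
    eV (srcP P v) * SH v P T Q = SH v P T Q := by
  cases P with
  | nil =>
    rw [srcP_nil]
    apply v_abs_T
    rw [mul_mulWr, r_vv]
  | cons e P =>
    rw [srcP_cons, SH_consP, ← mul_assoc, r_se]

lemma zeroV_SH {w : G.V} (v : G.V) (P : List G.E) (T : List (ℕ × Bool)) (Q : List G.E)
    (hne : w ≠ srcP P v) : eV w * SH v P T Q = 0 := by
  rw [← abs_SH v P T Q, ← mul_assoc, r_vw hne, zmul]

lemma mulWr_starE_v (v : G.V) (Q : List G.E) :
    mulWr (eV v) (starE Q) * eV (srcP Q v) = mulWr (eV v) (starE Q) := by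
  cases Q with
  | nil => exact r_vv v
  | cons q Q => rw [starE_cons, mulWr_snoc, srcP_cons, mul_assoc]; rw [show el (ASG.Gen.edgeS q) * eV (G.src q) = el (ASG.Gen.edgeS q) from d_sv q]

lemma SH_v (v : G.V) (P : List G.E) (T : List (ℕ × Bool)) (Q : List G.E) :
    SH v P T Q * eV (srcP Q v) = SH v P T Q := by
  unfold SH
  rw [mulW_mul, mulW_mul, mulWr_starE_v]

lemma SH_zeroV_right {w : G.V} (v : G.V) (P : List G.E) (T : List (ℕ × Bool)) (Q : List G.E)
    (hne : srcP Q v ≠ w) : SH v P T Q * eV w = 0 := by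
  rw [← SH_v v P T Q, mul_assoc, r_vw hne, mulz]

lemma DF_cons (x : G.V) (e : G.E) (D : List G.E) :
    DF x (e :: D) = eE e * DF x D * eS e := by
  show SH x (e :: D) [] (e :: D) = eE e * SH x D [] D * eS e
  unfold SH
  rw [starE_cons, mulWr_snoc, List.map_nil, mulW_nil, mulW_nil, List.map_cons, mulW_cons,
    ← mulW_mul, mul_assoc]
  rfl

def starT (T : List (ℕ × Bool)) : List (ℕ × Bool) := (T.map flipT).reverse

@[simp] lemma starT_nil : starT [] = [] := rfl

lemma starT_cons (τ : ℕ × Bool) (T : List (ℕ × Bool)) :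
    starT (τ :: T) = starT T ++ [flipT τ] := by simp [starT]

lemma gGen_star (v : G.V) (τ : ℕ × Bool) : (gGen v τ).star = gGen v (flipT τ) := by
  obtain ⟨i, b⟩ := τ; cases b <;> rfl

lemma starL_edges (P : List G.E) : starL (P.map ASG.Gen.edge) = starE P := by
  unfold starL starE
  rw [List.map_map]
  rfl

lemma starL_starE (Q : List G.E) : starL (starE Q) = Q.map ASG.Gen.edge := by
  unfold starL starE
  rw [List.map_reverse, List.reverse_reverse, List.map_map]
  rfl

lemma starL_T (v : G.V) (T : List (ℕ × Bool)) :
    starL (T.map (gGen v)) = (starT T).map (gGen v) := by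
  unfold starL starT
  rw [List.map_map, List.map_reverse, List.map_map]
  congr 1
  apply List.map_congr_left
  intro τ _
  exact gGen_star v τ

lemma swap_T (v : G.V) (T : List (ℕ × Bool)) :
    mulWr (eV v) (T.map (gGen v)) = mulW (T.map (gGen v)) (eV v) := by
  induction T with
  | nil => rfl
  | cons τ T ih =>
    rw [List.map_cons, mulWr_cons, mulW_cons]
    have h1 : eV v * el (gGen v τ) = el (gGen v τ) := v_gT v τ
    have h2 : el (gGen v τ) * eV v = el (gGen v τ) := gT_v v τ
    calc mulWr (eV v * el (gGen v τ)) (List.map (gGen v) T)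
        = mulWr (el (gGen v τ) * eV v) (List.map (gGen v) T) := by rw [h1, h2]
      _ = el (gGen v τ) * mulWr (eV v) (List.map (gGen v) T) := (mul_mulWr _ _ _).symm
      _ = el (gGen v τ) * mulW (List.map (gGen v) T) (eV v) := by rw [ih]

lemma star_SH (v : G.V) (P : List G.E) (T : List (ℕ × Bool)) (Q : List G.E) :
    star (SH v P T Q) = SH v Q (starT T) P := by
  unfold SH
  rw [star_mulW, star_mulW, star_mulWr, star_eV, starL_edges, starL_starE, starL_T]
  calc mulWr (mulWr (mulW (Q.map ASG.Gen.edge) (eV v)) ((starT T).map (gGen v))) (starE P)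
      = mulWr (mulW (Q.map ASG.Gen.edge) (mulW ((starT T).map (gGen v)) (eV v))) (starE P) := by
        rw [← mulW_mulWr, swap_T]
    _ = mulW (Q.map ASG.Gen.edge) (mulW ((starT T).map (gGen v)) (mulWr (eV v) (starE P))) := by
        rw [mulW_mulWr, mulW_mulWr]

lemma star_DF (x : G.V) (D : List G.E) : star (DF x D) = DF x D := star_SH x D [] D

end ASG
namespace ASG

variable {G : ASG}

lemma DF_cons' (x : G.V) (e : G.E) (D : List G.E) :
    DF x (e :: D) = eE e * (DF x D * eS e) := by rw [DF_cons, mul_assoc]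

lemma abs_DF (x : G.V) (D : List G.E) : eV (srcP D x) * DF x D = DF x D := abs_SH x D [] D

/-- a `t`-generator commutes with a projection `D x D*`. -/
lemma t_thru : ∀ (D : List G.E) (x : G.V), PathTo D x → ∀ τ : ℕ × Bool,
    gT (srcP D x) τ * DF x D = DF x D * gT (srcP D x) τ := by
  intro D
  induction D with
  | nil => intro x _ τ; rw [srcP_nil, DF_nil, gT_v, v_gT]
  | cons e D ih =>
    intro x h τ
    obtain ⟨h1, h2⟩ := h
    obtain ⟨τ', hp1, hp2⟩ := push e τ
    rw [← h1] at hp1 hp2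
    rw [DF_cons', srcP_cons]
    calc gT (G.src e) τ * (eE e * (DF x D * eS e))
        = eE e * (gT (srcP D x) τ' * (DF x D * eS e)) := by
          rw [← mul_assoc, hp1, mul_assoc]
      _ = eE e * (DF x D * (eS e * gT (G.src e) τ)) := by
          have hmid : gT (srcP D x) τ' * (DF x D * eS e)
              = DF x D * (eS e * gT (G.src e) τ) := by
            rw [← mul_assoc, ih x h2 τ', mul_assoc, ← hp2]
          rw [hmid]
      _ = (eE e * (DF x D * eS e)) * gT (G.src e) τ := by rw [mul_assoc, mul_assoc]

lemma cancel_starE : ∀ (Q : List G.E) (v : G.V), PathTo Q v → ∀ s : ASG.SEC G, eV v * s = s →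
    mulWr (eV v) (starE Q) * mulW (Q.map ASG.Gen.edge) s = s := by
  intro Q
  induction Q with
  | nil => intro v _ s hs; simpa using hs
  | cons q Q ih =>
    intro v h s hs
    obtain ⟨h1, h2⟩ := h
    rw [starE_cons, mulWr_snoc, List.map_cons, mulW_cons, mul_assoc,
      ← mul_assoc (el (ASG.Gen.edgeS q))]
    rw [show el (ASG.Gen.edgeS q) * el (ASG.Gen.edge q) = eV (G.rng q) from r_ee q]
    have habs : eV (G.rng q) * mulW (Q.map ASG.Gen.edge) s = mulW (Q.map ASG.Gen.edge) s := by
      rw [← h1]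
      cases Q with
      | nil => simpa using hs
      | cons r Q' =>
        rw [srcP_cons, List.map_cons, mulW_cons, ← mul_assoc]
        rw [show eV (G.src r) * el (ASG.Gen.edge r) = el (ASG.Gen.edge r) from r_se r]
    rw [habs]
    exact ih v h2 s hs

lemma TTstar (v : G.V) : ∀ T : List (ℕ × Bool), ∀ s : ASG.SEC G, eV v * s = s →
    mulW (T.map (gGen v)) (mulW ((starT T).map (gGen v)) s) = s := by
  intro T
  induction T with
  | nil => intro s hs; simp
  | cons τ T ih =>
    intro s hs
    rw [starT_cons, List.map_append, mulW_append, List.map_cons, mulW_cons, List.map_cons,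
      List.map_nil, mulW_cons, mulW_nil]
    have hyp : eV v * (el (gGen v (flipT τ)) * s) = el (gGen v (flipT τ)) * s := by
      rw [← mul_assoc, ← gT_def, v_gT, gT_def]
    rw [ih (el (gGen v (flipT τ)) * s) hyp, ← mul_assoc, ← gT_def, ← gT_def, gT_flip, hs]

lemma vabs_inner (v : G.V) (T : List (ℕ × Bool)) (Q : List G.E) :
    eV v * mulW (T.map (gGen v)) (mulWr (eV v) (starE Q))
      = mulW (T.map (gGen v)) (mulWr (eV v) (starE Q)) := by
  apply v_abs_T
  rw [mul_mulWr, r_vv]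

lemma SH_mul_star (v : G.V) (P : List G.E) (T : List (ℕ × Bool)) (Q : List G.E)
    (hQ : PathTo Q v) : SH v P T Q * star (SH v P T Q) = DF v P := by
  rw [star_SH]
  show mulW (P.map .edge) (mulW (T.map (gGen v)) (mulWr (eV v) (starE Q)))
      * SH v Q (starT T) P = DF v P
  rw [mulW_mul, mulW_mul]
  have inner : mulWr (eV v) (starE Q) * SH v Q (starT T) P
      = mulW ((starT T).map (gGen v)) (mulWr (eV v) (starE P)) := by
    show mulWr (eV v) (starE Q)
        * mulW (Q.map ASG.Gen.edge)
          (mulW ((starT T).map (gGen v)) (mulWr (eV v) (starE P))) = _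
    exact cancel_starE Q v hQ _ (vabs_inner v (starT T) P)
  rw [inner]
  show mulW (P.map .edge)
      (mulW (T.map (gGen v)) (mulW ((starT T).map (gGen v)) (mulWr (eV v) (starE P)))) = _
  rw [TTstar v T _ (by rw [mul_mulWr, r_vv])]
  rfl

lemma SH_reg (v : G.V) (P : List G.E) (T : List (ℕ × Bool)) (Q : List G.E)
    (hP : PathTo P v) (hQ : PathTo Q v) :
    SH v P T Q * star (SH v P T Q) * SH v P T Q = SH v P T Q := by
  rw [SH_mul_star v P T Q hQ]
  show mulW (P.map .edge) (mulW (([] : List (ℕ × Bool)).map (gGen v)) (mulWr (eV v) (starE P)))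
      * SH v P T Q = _
  rw [List.map_nil, mulW_nil, mulW_mul]
  unfold SH
  rw [cancel_starE P v hP _ (vabs_inner v T Q)]

end ASG
namespace ASG

variable {G : ASG}

lemma mrw {a b c d x : ASG.SEC G} (h : a * b = c * d) : a * (b * x) = c * (d * x) := by
  rw [← mul_assoc, h, mul_assoc]

lemma mrw1 {a b c x : ASG.SEC G} (h : a * b = c) : a * (b * x) = c * x := by
  rw [← mul_assoc, h]

lemma congL (c : ASG.SEC G) {a b : ASG.SEC G} (h : a = b) : c * a = c * b := congrArg _ h

lemma gT_true (v : G.V) (n : ℕ) : gT v (n, true) = el (.tI v n) := rfl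
lemma gT_false (v : G.V) (n : ℕ) : gT v (n, false) = el (.t v n) := rfl

lemma classify_at (p : G.I) (hp : G.free p) (e : G.E) (hs : G.src e = G.fv p) :
    (∃ i, e = G.α p i) ∨ ∃ i t, e = G.β p i t := by
  have hπ : G.π (G.src e) = p := by rw [hs, pi_fv hp]
  have hfree : G.free (G.π (G.src e)) := by rw [hπ]; exact hp
  obtain ⟨p₀, hp₀, hpe, hs₀, he⟩ := classify' e hfree
  have hpp : p₀ = p := by rw [← hpe, hπ]
  subst hpp
  exact he

lemma zero_ab (p : G.I) (hp : G.free p) (i : Fin (G.k p)) (t : Fin (G.g p i)) :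
    eS (G.α p i) * eE (G.β p i t) = 0 :=
  zero_ef _ (G.fv p) (X_mem p hp i) (mem_Xa p i) (mem_Xb p i t) (G.α_ne_β p hp i i t)

/-- pushing `α(p,i)*` through a projection based at `fv p`. -/
lemma aS_thru (p : G.I) (hp : G.free p) (i : Fin (G.k p)) :
    ∀ (D : List G.E) (x : G.V), PathTo D x → srcP D x = G.fv p →
    eS (G.α p i) * DF x D = 0 ∨
    ∃ (D' : List G.E) (x' : G.V), PathTo D' x' ∧ srcP D' x' = G.fv p ∧
      D'.length ≤ D.length ∧ eS (G.α p i) * DF x D = DF x' D' * eS (G.α p i) := by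
  intro D
  induction D with
  | nil =>
    intro x _ hx
    rw [srcP_nil] at hx
    subst hx
    right
    refine ⟨[], G.fv p, trivial, rfl, le_refl _, ?_⟩
    have h1 : eS (G.α p i) * eV (G.fv p) = eS (G.α p i) := by
      have := d_sv (G.α p i); rwa [G.α_src p hp i] at this
    have h2 : eV (G.fv p) * eS (G.α p i) = eS (G.α p i) := by
      have := d_ve (G.α p i); rwa [G.α_rng p hp i] at this
    rw [DF_nil, h1, h2]
  | cons e D ih =>
    intro x h hx
    obtain ⟨h1, h2⟩ := h
    rw [srcP_cons] at hx
    rcases classify_at p hp e hx with ⟨j, rfl⟩ | ⟨j, t, rfl⟩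
    · by_cases hij : i = j
      · subst hij
        right
        refine ⟨D, x, h2, by rw [h1, G.α_rng p hp i], Nat.le_succ _, ?_⟩
        have e1 : eS (G.α p i) * (eE (G.α p i) * (DF x D * eS (G.α p i)))
            = eV (G.rng (G.α p i)) * (DF x D * eS (G.α p i)) := mrw1 (r_ee _)
        rw [DF_cons', e1, ← mul_assoc, ← h1, abs_DF]
      · have hcomm : eS (G.α p i) * eE (G.α p j) = eE (G.α p j) * eS (G.α p i) :=
          d_se_ae p hp hij
        have hsd : srcP D x = G.fv p := by rw [h1, G.α_rng p hp j]
        rcases ih x h2 hsd with h0 | ⟨D', x', hD', hsD', hlen, heq⟩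
        · left
          rw [DF_cons']
          calc eS (G.α p i) * (eE (G.α p j) * (DF x D * eS (G.α p j)))
              = eE (G.α p j) * (eS (G.α p i) * (DF x D * eS (G.α p j))) := mrw hcomm
            _ = eE (G.α p j) * ((eS (G.α p i) * DF x D) * eS (G.α p j)) :=
                congL _ (mul_assoc _ _ _).symm
            _ = 0 := by rw [h0, zmul, mulz]
        · right
          refine ⟨G.α p j :: D', x',
            ⟨by rw [hsD', G.α_rng p hp j], hD'⟩,
            by rw [srcP_cons, G.α_src p hp j],
            Nat.succ_le_succ hlen, ?_⟩
          conv_lhs => rw [DF_cons']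
          calc eS (G.α p i) * (eE (G.α p j) * (DF x D * eS (G.α p j)))
              = eE (G.α p j) * (eS (G.α p i) * (DF x D * eS (G.α p j))) := mrw hcomm
            _ = eE (G.α p j) * ((eS (G.α p i) * DF x D) * eS (G.α p j)) :=
                congL _ (mul_assoc _ _ _).symm
            _ = eE (G.α p j) * ((DF x' D' * eS (G.α p i)) * eS (G.α p j)) := by rw [heq]
            _ = eE (G.α p j) * (DF x' D' * (eS (G.α p i) * eS (G.α p j))) :=
                congL _ (mul_assoc _ _ _)
            _ = eE (G.α p j) * (DF x' D' * (eS (G.α p j) * eS (G.α p i))) := by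
                rw [d_ss p hp hij]
            _ = eE (G.α p j) * ((DF x' D' * eS (G.α p j)) * eS (G.α p i)) :=
                congL _ (mul_assoc _ _ _).symm
            _ = (eE (G.α p j) * (DF x' D' * eS (G.α p j))) * eS (G.α p i) :=
                (mul_assoc _ _ _).symm
            _ = DF x' (G.α p j :: D') * eS (G.α p i) := by rw [DF_cons']
    · by_cases hij : i = j
      · subst hij
        left
        rw [DF_cons', ← mul_assoc, zero_ab p hp i t, zmul]
      · have hab : eS (G.α p i) * eE (G.β p j t)
            = eE (G.β p j t) * gT (G.rng (G.β p j t)) (ASG.sig (j : ℕ) (i : ℕ), true) := by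
          rw [gT_true]; exact r_aSb p hp hij t
        have htI : gT (G.rng (G.β p j t)) (ASG.sig (j : ℕ) (i : ℕ), true) * eS (G.β p j t)
            = eS (G.β p j t) * eS (G.α p i) := by
          rw [gT_true]; exact d_tIs p hp hij t
        have ht : gT (G.rng (G.β p j t)) (ASG.sig (j : ℕ) (i : ℕ), true) * DF x D
            = DF x D * gT (G.rng (G.β p j t)) (ASG.sig (j : ℕ) (i : ℕ), true) := by
          have := t_thru D x h2 (ASG.sig (j : ℕ) (i : ℕ), true)
          rwa [h1] at this
        right
        refine ⟨G.β p j t :: D, x, ⟨h1, h2⟩,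
          by rw [srcP_cons, G.β_src p hp j t], le_refl _, ?_⟩
        conv_lhs => rw [DF_cons']
        calc eS (G.α p i) * (eE (G.β p j t) * (DF x D * eS (G.β p j t)))
            = eE (G.β p j t) * (gT (G.rng (G.β p j t)) (ASG.sig (j : ℕ) (i : ℕ), true)
                * (DF x D * eS (G.β p j t))) := mrw hab
          _ = eE (G.β p j t) * ((gT (G.rng (G.β p j t)) (ASG.sig (j : ℕ) (i : ℕ), true)
                * DF x D) * eS (G.β p j t)) := congL _ (mul_assoc _ _ _).symm
          _ = eE (G.β p j t) * ((DF x D * gT (G.rng (G.β p j t))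
                (ASG.sig (j : ℕ) (i : ℕ), true)) * eS (G.β p j t)) := by rw [ht]
          _ = eE (G.β p j t) * (DF x D * (gT (G.rng (G.β p j t))
                (ASG.sig (j : ℕ) (i : ℕ), true) * eS (G.β p j t))) := congL _ (mul_assoc _ _ _)
          _ = eE (G.β p j t) * (DF x D * (eS (G.β p j t) * eS (G.α p i))) := by rw [htI]
          _ = eE (G.β p j t) * ((DF x D * eS (G.β p j t)) * eS (G.α p i)) :=
              congL _ (mul_assoc _ _ _).symm
          _ = (eE (G.β p j t) * (DF x D * eS (G.β p j t))) * eS (G.α p i) :=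
              (mul_assoc _ _ _).symm
          _ = DF x (G.β p j t :: D) * eS (G.α p i) := by rw [DF_cons']

end ASG
namespace ASG

variable {G : ASG}

lemma DF_consR (x : G.V) (e : G.E) (D : List G.E) (w : ASG.SEC G) :
    DF x (e :: D) * w = eE e * (DF x D * (eS e * w)) := by
  rw [DF_cons', mul_assoc, mul_assoc]

lemma middle_zero (x y : G.V) (P' R' : List G.E) {pe re : G.E} (h : eS pe * eE re = 0) :
    DF x (pe :: P') * DF y (re :: R') = 0 := by
  rw [DF_cons', DF_cons', mul_assoc, mul_assoc, ← mul_assoc (eS pe), h, zmul, mulz, mulz]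

lemma M_nilP (x : G.V) (R : List G.E) (y : G.V) (hR : PathTo R y) :
    DF x [] * DF y R = 0 ∨
    ∃ (D : List G.E) (z : G.V), PathTo D z ∧ srcP D z = srcP ([] : List G.E) x ∧
      DF x [] * DF y R = DF z D := by
  by_cases hxy : x = srcP R y
  · right
    refine ⟨R, y, hR, by rw [srcP_nil, hxy], ?_⟩
    rw [DF_nil, hxy, abs_DF]
  · left
    rw [DF_nil, ← abs_DF y R, ← mul_assoc, r_vw hxy, zmul]

lemma M_nilR (P : List G.E) (x : G.V) (y : G.V) (hP : PathTo P x) :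
    DF x P * DF y [] = 0 ∨
    ∃ (D : List G.E) (z : G.V), PathTo D z ∧ srcP D z = srcP P x ∧
      DF x P * DF y [] = DF z D := by
  by_cases hxy : srcP P x = y
  · right
    refine ⟨P, x, hP, rfl, ?_⟩
    rw [DF_nil, ← hxy]
    exact SH_v x P [] P
  · left
    rw [DF_nil]
    exact SH_zeroV_right x P [] P hxy

lemma Mmain : ∀ n : ℕ, ∀ (P : List G.E) (x : G.V) (R : List G.E) (y : G.V),
    PathTo P x → PathTo R y → P.length + R.length ≤ n →
    DF x P * DF y R = 0 ∨
    ∃ (D : List G.E) (z : G.V), PathTo D z ∧ srcP D z = srcP P x ∧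
      DF x P * DF y R = DF z D := by
  intro n
  induction n with
  | zero =>
    intro P x R y hP hR hlen
    have hP0 : P = [] := List.eq_nil_of_length_eq_zero (by omega)
    have hR0 : R = [] := List.eq_nil_of_length_eq_zero (by omega)
    subst hP0; subst hR0
    exact M_nilP x [] y trivial
  | succ n ih =>
    intro P x R y hP hR hlen
    cases P with
    | nil => exact M_nilP x R y hR
    | cons pe P' =>
      cases R with
      | nil => exact M_nilR (pe :: P') x y hP
      | cons re R' =>
        obtain ⟨hp1, hp2⟩ := hP
        obtain ⟨hr1, hr2⟩ := hR
        have hlen2 : P'.length + R'.length + 1 ≤ n := by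
          simp only [List.length_cons] at hlen; omega
        by_cases hee : pe = re
        · -- equal heads
          subst hee
          have key : DF x (pe :: P') * DF y (pe :: R')
              = eE pe * ((DF x P' * DF y R') * eS pe) := by
            rw [DF_consR, DF_cons']
            have inner : eS pe * (eE pe * (DF y R' * eS pe))
                = eV (G.rng pe) * (DF y R' * eS pe) := mrw1 (r_ee pe)
            rw [inner, ← mul_assoc (eV (G.rng pe)), ← hr1, abs_DF, ← mul_assoc]
            simp only [mul_assoc]
          rcases ih P' x R' y hp2 hr2 (by omega) with h0 | ⟨D, z, hD, hsD, heq⟩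
          · left; rw [key, h0, zmul, mulz]
          · right
            refine ⟨pe :: D, z, ⟨by rw [hsD, hp1], hD⟩, by rw [srcP_cons, srcP_cons], ?_⟩
            rw [key, heq, ← DF_cons']
        · by_cases hsrc : G.src pe = G.src re
          · rcases headCases pe re hsrc hee with h0 | ⟨p, hp, iP, jR, hij, hfvP, hpe', hre'⟩
            · left; exact middle_zero x y P' R' h0
            · have hfvR : G.src re = G.fv p := by rw [← hsrc]; exact hfvP
              rcases hpe' with rfl | ⟨sP, rfl⟩
              · -- pe is a loop : use aS_thru on the whole right factor
                have hsrcR : srcP (re :: R') y = G.fv p := by rw [srcP_cons]; exact hfvR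
                have hsP' : srcP P' x = G.fv p := by
                  rw [hp1, G.α_rng p hp iP]
                rcases aS_thru p hp iP (re :: R') y ⟨hr1, hr2⟩ hsrcR with
                  h0 | ⟨R'', y', hR'', hsR'', hlenR, heqR⟩
                · left
                  rw [DF_consR, h0, mulz, mulz]
                · have step : DF x (G.α p iP :: P') * DF y (re :: R')
                      = eE (G.α p iP) * ((DF x P' * DF y' R'') * eS (G.α p iP)) := by
                    rw [DF_consR, heqR, ← mul_assoc (DF x P'), ← mul_assoc]
                  rcases ih P' x R'' y' hp2 hR''
                      (by simp only [List.length_cons] at hlenR ⊢; omega) with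
                    h0 | ⟨D, z, hD, hsD, heq2⟩
                  · left; rw [step, h0, zmul, mulz]
                  · right
                    refine ⟨G.α p iP :: D, z, ⟨by rw [hsD, hp1], hD⟩,
                      by rw [srcP_cons, srcP_cons], ?_⟩
                    rw [step, heq2, ← DF_cons']
              · rcases hre' with rfl | ⟨tR, rfl⟩
                · -- (β, α) case
                  have hba : eS (G.β p iP sP) * eE (G.α p jR)
                      = gT (G.rng (G.β p iP sP)) (ASG.sig (iP : ℕ) (jR : ℕ), false)
                        * eS (G.β p iP sP) := by
                    rw [gT_false]; exact d_sb_ae p hp hij.symm sP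
                  have hrab : eE (G.β p iP sP)
                        * gT (G.rng (G.β p iP sP)) (ASG.sig (iP : ℕ) (jR : ℕ), false)
                      = eE (G.α p jR) * eE (G.β p iP sP) := by
                    rw [gT_false]; exact (r_ab p hp hij.symm sP).symm
                  have ht : gT (G.rng (G.β p iP sP)) (ASG.sig (iP : ℕ) (jR : ℕ), false)
                        * DF x P'
                      = DF x P'
                        * gT (G.rng (G.β p iP sP)) (ASG.sig (iP : ℕ) (jR : ℕ), false) := by
                    have := t_thru P' x hp2 (ASG.sig (iP : ℕ) (jR : ℕ), false)
                    rwa [hp1] at this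
                  set σ := gT (G.rng (G.β p iP sP)) (ASG.sig (iP : ℕ) (jR : ℕ), false) with hσ
                  have step : DF x (G.β p iP sP :: P') * DF y (G.α p jR :: R')
                      = eE (G.α p jR) * ((DF x (G.β p iP sP :: P') * DF y R')
                          * eS (G.α p jR)) := by
                    calc DF x (G.β p iP sP :: P') * DF y (G.α p jR :: R')
                        = eE (G.β p iP sP) * (DF x P' * (eS (G.β p iP sP)
                            * (eE (G.α p jR) * (DF y R' * eS (G.α p jR))))) := by
                          rw [DF_consR, DF_cons']
                      _ = eE (G.β p iP sP) * (DF x P' * (σ * (eS (G.β p iP sP)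
                            * (DF y R' * eS (G.α p jR))))) := by
                          rw [congL (eE (G.β p iP sP)) (congL (DF x P') (mrw hba))]
                      _ = eE (G.β p iP sP) * (σ * (DF x P' * (eS (G.β p iP sP)
                            * (DF y R' * eS (G.α p jR))))) := by
                          rw [← mul_assoc (DF x P'), ← ht, mul_assoc]
                      _ = eE (G.α p jR) * (eE (G.β p iP sP) * (DF x P' * (eS (G.β p iP sP)
                            * (DF y R' * eS (G.α p jR))))) := by
                          rw [← mul_assoc, ← mul_assoc, hrab, mul_assoc, mul_assoc]
                      _ = eE (G.α p jR) * (DF x (G.β p iP sP :: P')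
                            * (DF y R' * eS (G.α p jR))) := by
                          rw [DF_consR]
                      _ = eE (G.α p jR) * ((DF x (G.β p iP sP :: P') * DF y R')
                            * eS (G.α p jR)) := by
                          rw [← mul_assoc (DF x (G.β p iP sP :: P'))]
                  rcases ih (G.β p iP sP :: P') x R' y ⟨hp1, hp2⟩ hr2
                      (by simp only [List.length_cons]; omega) with
                    h0 | ⟨D, z, hD, hsD, heq2⟩
                  · left; rw [step, h0, zmul, mulz]
                  · right
                    have hsDz : srcP D z = G.rng (G.α p jR) := by
                      rw [hsD, srcP_cons, hfvP, G.α_rng p hp jR]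
                    refine ⟨G.α p jR :: D, z, ⟨hsDz, hD⟩, ?_, ?_⟩
                    · rw [srcP_cons, srcP_cons, G.α_src p hp jR, hfvP]
                    · rw [step, heq2, ← DF_cons']
                · -- (β, β) case : different X's, zero
                  left
                  exact middle_zero x y P' R' (r_bb p hp hij sP tR)
          · left
            exact middle_zero x y P' R' (zero_sv hsrc)

end ASG
namespace ASG

variable {G : ASG}

def ShAt (u : G.V) (w : ASG.SEC G) : Prop :=
  ∃ (v : G.V) (P : List G.E) (T : List (ℕ × Bool)) (Q : List G.E),
    PathTo P v ∧ PathTo Q v ∧ srcP P v = u ∧ w = SH v P T Q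

lemma shAt_abs {u : G.V} {w : ASG.SEC G} (h : ShAt u w) : eV u * w = w := by
  obtain ⟨v, P, T, Q, hP, hQ, hsu, rfl⟩ := h
  rw [← hsu]
  exact abs_SH v P T Q

lemma shAt_zeroV {u : G.V} {wd : ASG.SEC G} (h : ShAt u wd) {w : G.V} (hw : w ≠ u) :
    eV w * wd = 0 := by
  rw [← shAt_abs h, ← mul_assoc, r_vw hw, zmul]

lemma e_v_zero {f : G.E} {w : G.V} (hw : G.rng f ≠ w) : eE f * eV w = 0 := by
  rw [← r_er f, mul_assoc, r_vw hw, mulz]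

lemma gT_v_zero {w u : G.V} (hw : w ≠ u) (τ : ℕ × Bool) : gT w τ * eV u = 0 := by
  rw [← gT_v w τ, mul_assoc, r_vw hw, mulz]

/-- pushing a `t`-generator into a shape. -/
lemma t_into_SH (v : G.V) : ∀ (P : List G.E) (T : List (ℕ × Bool)) (Q : List G.E)
    (τ : ℕ × Bool), PathTo P v →
    ∃ τ', gT (srcP P v) τ * SH v P T Q = SH v P (τ' :: T) Q := by
  intro P
  induction P with
  | nil =>
    intro T Q τ _
    exact ⟨τ, by rw [srcP_nil, SH_consT]⟩
  | cons e P ih =>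
    intro T Q τ hP
    obtain ⟨h1, h2⟩ := hP
    obtain ⟨τ₁, hp1, _⟩ := push e τ
    obtain ⟨τ', hτ'⟩ := ih T Q τ₁ h2
    refine ⟨τ', ?_⟩
    rw [← h1] at hp1
    rw [srcP_cons, SH_consP, ← mul_assoc, hp1, mul_assoc, hτ', SH_consP]

lemma LM_edgeS_nilP (f : G.E) (v : G.V) (hsf : G.src f = v) :
    ∀ (T : List (ℕ × Bool)) (Q : List G.E), ∃ T',
      eS f * SH v [] T Q = SH (G.rng f) [] T' (Q ++ [f]) := by
  subst hsf
  intro T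
  induction T with
  | nil =>
    intro Q
    refine ⟨[], ?_⟩
    rw [SH_nil, SH_nil, starE_snoc, mulWr_cons, mul_mulWr, d_sv]
    rw [show eV (G.rng f) * el (ASG.Gen.edgeS f) = el (ASG.Gen.edgeS f) from d_ve f]
    rfl
  | cons τ T ih =>
    intro Q
    obtain ⟨T', hT'⟩ := ih Q
    obtain ⟨τ₁, _, hp2⟩ := push f τ
    refine ⟨τ₁ :: T', ?_⟩
    rw [SH_consT, ← mul_assoc, hp2, mul_assoc, hT', SH_consT]

/-- the main left-multiplication lemma for a starred edge. -/
lemma LM_edgeS (f : G.E) : ∀ (P : List G.E) (v : G.V) (T : List (ℕ × Bool)) (Q : List G.E),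
    PathTo P v → PathTo Q v → G.src f = srcP P v →
    eS f * SH v P T Q = 0 ∨
    ∃ (P₂ : List G.E) (v₂ : G.V) (T₂ : List (ℕ × Bool)) (Q₂ : List G.E),
      PathTo P₂ v₂ ∧ PathTo Q₂ v₂ ∧ srcP P₂ v₂ = G.rng f ∧
      eS f * SH v P T Q = SH v₂ P₂ T₂ Q₂ := by
  intro P
  induction P with
  | nil =>
    intro v T Q hP hQ hsf
    rw [srcP_nil] at hsf
    obtain ⟨T', hT'⟩ := LM_edgeS_nilP f v hsf T Q
    right
    exact ⟨[], G.rng f, T', Q ++ [f], trivial, pathTo_snoc hQ hsf, rfl, hT'⟩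
  | cons e P' ihP =>
    intro v T Q hP hQ hsf
    obtain ⟨h1, h2⟩ := hP
    rw [srcP_cons] at hsf
    by_cases hef : f = e
    · subst hef
      right
      refine ⟨P', v, T, Q, h2, hQ, h1, ?_⟩
      rw [SH_consP, ← mul_assoc, r_ee, ← h1, abs_SH]
    · rcases headCases f e hsf hef with h0 | ⟨p, hp, i, j, hij, hfv, hfi, hej⟩
      · left
        rw [SH_consP, ← mul_assoc, h0, zmul]
      · rcases hfi with rfl | ⟨s, rfl⟩
        · -- f = α p i
          rcases hej with rfl | ⟨t, rfl⟩
          · -- e = α p j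
            have hsP' : G.src (G.α p i) = srcP P' v := by
              rw [hfv, h1, G.α_rng p hp j]
            rcases ihP v T Q h2 hQ hsP' with h0 | ⟨P₂, v₂, T₂, Q₂, hP₂, hQ₂, hs₂, heq₂⟩
            · left
              rw [SH_consP, ← mul_assoc, d_se_ae p hp hij, mul_assoc, h0, mulz]
            · right
              refine ⟨G.α p j :: P₂, v₂, T₂, Q₂, ⟨?_, hP₂⟩, hQ₂, ?_, ?_⟩
              · rw [hs₂, G.α_rng p hp i, G.α_rng p hp j]
              · rw [srcP_cons, G.α_src p hp j, G.α_rng p hp i]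
              · rw [SH_consP, ← mul_assoc, d_se_ae p hp hij, mul_assoc, heq₂, SH_consP]
          · -- e = β p j t
            have hab : eS (G.α p i) * eE (G.β p j t)
                = eE (G.β p j t) * gT (G.rng (G.β p j t)) (ASG.sig (j : ℕ) (i : ℕ), true) := by
              rw [gT_true]; exact r_aSb p hp hij t
            obtain ⟨τ', hτ'⟩ := t_into_SH v P' T Q (ASG.sig (j : ℕ) (i : ℕ), true) h2
            rw [h1] at hτ'
            right
            refine ⟨G.β p j t :: P', v, τ' :: T, Q, ⟨h1, h2⟩, hQ, ?_, ?_⟩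
            · rw [srcP_cons, G.β_src p hp j t, G.α_rng p hp i]
            · rw [SH_consP, ← mul_assoc, hab, mul_assoc, hτ', SH_consP]
        · -- f = β p i s
          rcases hej with rfl | ⟨t, rfl⟩
          · -- e = α p j
            have hba : eS (G.β p i s) * eE (G.α p j)
                = gT (G.rng (G.β p i s)) (ASG.sig (i : ℕ) (j : ℕ), false)
                  * eS (G.β p i s) := by
              rw [gT_false]; exact d_sb_ae p hp hij.symm s
            have hsP' : G.src (G.β p i s) = srcP P' v := by
              rw [hfv, h1, G.α_rng p hp j]
            rcases ihP v T Q h2 hQ hsP' with h0 | ⟨P₂, v₂, T₂, Q₂, hP₂, hQ₂, hs₂, heq₂⟩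
            · left
              rw [SH_consP, ← mul_assoc, hba, mul_assoc, h0, mulz]
            · obtain ⟨τ', hτ'⟩ := t_into_SH v₂ P₂ T₂ Q₂
                (ASG.sig (i : ℕ) (j : ℕ), false) hP₂
              rw [hs₂] at hτ'
              right
              refine ⟨P₂, v₂, τ' :: T₂, Q₂, hP₂, hQ₂, hs₂, ?_⟩
              rw [SH_consP, ← mul_assoc, hba, mul_assoc, heq₂, hτ']
          · -- e = β p j t
            left
            rw [SH_consP, ← mul_assoc, r_bb p hp hij s t, zmul]

lemma LM_edgeS_sh (f : G.E) {u : G.V} {wd : ASG.SEC G} (h : ShAt u wd) :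
    eS f * wd = 0 ∨ ∃ wd', ShAt (G.rng f) wd' ∧ eS f * wd = wd' := by
  obtain ⟨v, P, T, Q, hP, hQ, hsu, rfl⟩ := h
  by_cases hsf : G.src f = u
  · rcases LM_edgeS f P v T Q hP hQ (by rw [hsf, ← hsu]) with h0 | ⟨P₂, v₂, T₂, Q₂, h1, h2, h3, h4⟩
    · exact .inl h0
    · exact .inr ⟨SH v₂ P₂ T₂ Q₂, ⟨v₂, P₂, T₂, Q₂, h1, h2, h3, rfl⟩, h4⟩
  · left
    rw [← d_sv f, mul_assoc, shAt_zeroV ⟨v, P, T, Q, hP, hQ, hsu, rfl⟩ hsf, mulz]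

end ASG
namespace ASG

variable {G : ASG}

lemma shAt_el_vert (v : G.V) : ShAt v (el (.vert v)) :=
  ⟨v, [], [], [], trivial, trivial, rfl, rfl⟩

lemma shAt_el_edge (f : G.E) : ShAt (G.src f) (el (.edge f)) := by
  refine ⟨G.rng f, [f], [], [], ⟨rfl, trivial⟩, trivial, rfl, ?_⟩
  show eE f = SH (G.rng f) [f] [] []
  rw [SH_consP]
  show eE f = eE f * eV (G.rng f)
  rw [r_er]

lemma shAt_el_edgeS (f : G.E) : ShAt (G.rng f) (el (.edgeS f)) := by
  refine ⟨G.rng f, [], [], [f], trivial, ⟨rfl, trivial⟩, rfl, ?_⟩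
  show eS f = SH (G.rng f) [] [] [f]
  show eS f = mulWr (eV (G.rng f)) (starE [f])
  show eS f = eV (G.rng f) * eS f
  rw [d_ve]

lemma shAt_el_t (v : G.V) (n : ℕ) : ShAt v (el (.t v n)) := by
  refine ⟨v, [], [(n, false)], [], trivial, trivial, rfl, ?_⟩
  show el (.t v n) = el (.t v n) * eV v
  rw [r_tv]

lemma shAt_el_tI (v : G.V) (n : ℕ) : ShAt v (el (.tI v n)) := by
  refine ⟨v, [], [(n, true)], [], trivial, trivial, rfl, ?_⟩
  show el (.tI v n) = el (.tI v n) * eV v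
  rw [d_tIv]

lemma LM_step (g : ASG.Gen G) {u : G.V} {wd : ASG.SEC G} (h : ShAt u wd) :
    el g * wd = 0 ∨ ∃ u', ShAt u' (el g * wd) := by
  cases g with
  | vert w =>
    by_cases hw : w = u
    · subst hw
      right
      exact ⟨w, (shAt_abs h).symm ▸ h⟩
    · left
      exact shAt_zeroV h hw
  | edge f =>
    by_cases hr : G.rng f = u
    · right
      obtain ⟨v, P, T, Q, hP, hQ, hsu, rfl⟩ := h
      exact ⟨G.src f, v, f :: P, T, Q, ⟨by rw [hsu, ← hr], hP⟩, hQ, srcP_cons f P v,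
        (SH_consP v f P T Q).symm⟩
    · left
      rw [← shAt_abs h, ← mul_assoc,
        show el (.edge f) * eV u = (0 : ASG.SEC G) from e_v_zero hr, zmul]
  | edgeS f =>
    rcases LM_edgeS_sh f h with h0 | ⟨wd', hw', heq⟩
    · exact .inl h0
    · exact .inr ⟨G.rng f, heq ▸ hw'⟩
  | t w n =>
    by_cases hw : w = u
    · subst hw
      right
      obtain ⟨v, P, T, Q, hP, hQ, hsu, rfl⟩ := h
      obtain ⟨τ', hτ'⟩ := t_into_SH v P T Q (n, false) hP
      rw [hsu] at hτ'
      exact ⟨w, ⟨v, P, τ' :: T, Q, hP, hQ, hsu, hτ'⟩⟩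
    · left
      rw [← shAt_abs h, ← mul_assoc,
        show el (.t w n) * eV u = (0 : ASG.SEC G) from gT_v_zero hw (n, false), zmul]
  | tI w n =>
    by_cases hw : w = u
    · subst hw
      right
      obtain ⟨v, P, T, Q, hP, hQ, hsu, rfl⟩ := h
      obtain ⟨τ', hτ'⟩ := t_into_SH v P T Q (n, true) hP
      rw [hsu] at hτ'
      exact ⟨w, ⟨v, P, τ' :: T, Q, hP, hQ, hsu, hτ'⟩⟩
    · left
      rw [← shAt_abs h, ← mul_assoc,
        show el (.tI w n) * eV u = (0 : ASG.SEC G) from gT_v_zero hw (n, true), zmul]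

lemma total (x : ASG.SEC G) : x = 0 ∨ ∃ u, ShAt u x := by
  induction x using Quotient.ind with
  | _ a => ?_
  cases a with
  | none => exact .inl rfl
  | some w =>
    obtain ⟨g, l⟩ := w
    induction l generalizing g with
    | nil =>
      right
      cases g with
      | vert v => exact ⟨v, shAt_el_vert v⟩
      | edge f => exact ⟨G.src f, shAt_el_edge f⟩
      | edgeS f => exact ⟨G.rng f, shAt_el_edgeS f⟩
      | t v n => exact ⟨v, shAt_el_t v n⟩
      | tI v n => exact ⟨v, shAt_el_tI v n⟩
    | cons h l ih =>
      have hsplit : (mkq (some ⟨g, h :: l⟩) : ASG.SEC G) = el g * mkq (some ⟨h, l⟩) := rfl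
      rcases ih h with h0 | ⟨u, hu⟩
      · left
        show mkq (some ⟨g, h :: l⟩) = 0
        rw [hsplit]
        rw [show (mkq (some ⟨h, l⟩) : ASG.SEC G) = 0 from h0, mulz]
      · rcases LM_step g hu with h0 | ⟨u', hu'⟩
        · left
          show mkq (some ⟨g, h :: l⟩) = 0
          rw [hsplit]
          exact h0
        · right
          refine ⟨u', ?_⟩
          show ShAt u' (mkq (some ⟨g, h :: l⟩))
          rw [hsplit]
          exact hu'

end ASG
namespace ASG

variable {G : ASG}

/-- `S(E,C)` is `*`-regular. -/
lemma regF1 (x : ASG.SEC G) : x * star x * x = x := by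
  rcases total x with rfl | ⟨u, v, P, T, Q, hP, hQ, hsu, rfl⟩
  · rw [star_zero', zmul, zmul]
  · exact SH_reg v P T Q hP hQ

lemma xxstar (x : ASG.SEC G) :
    x * star x = 0 ∨ ∃ v P, PathTo P v ∧ x * star x = DF v P := by
  rcases total x with rfl | ⟨u, v, P, T, Q, hP, hQ, hsu, rfl⟩
  · left; rw [star_zero', zmul]
  · right; exact ⟨v, P, hP, SH_mul_star v P T Q hQ⟩

/-- range projections commute. -/
lemma commF3 (x y : ASG.SEC G) :
    (x * star x) * (y * star y) = (y * star y) * (x * star x) := by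
  rcases xxstar x with hx | ⟨v, P, hP, hx⟩
  · rw [hx, zmul, mulz]
  rcases xxstar y with hy | ⟨w, R, hR, hy⟩
  · rw [hy, zmul, mulz]
  rw [hx, hy]
  have hsym : DF w R * DF v P = star (DF v P * DF w R) := by
    rw [star_mul', star_DF, star_DF]
  rcases Mmain (P.length + R.length) P v R w hP hR (le_refl _) with h0 | ⟨D, z, hD, _, heq⟩
  · rw [h0, hsym, h0, star_zero']
  · rw [heq, hsym, heq, star_DF]

/-- idempotents of `S(E,C)` are self-adjoint. -/
lemma idem_star {e : ASG.SEC G} (he : e * e = e) : star e = e := by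
  have hF1e : e * star e * e = e := regF1 e
  have hF1es : star e * e * star e = star e := by
    have := regF1 (star e); rwa [star_star'] at this
  have hss : star e * star e = star e := by rw [← star_mul', he]
  have hcomm : (e * star e) * (star e * e) = (star e * e) * (e * star e) := by
    have h3 := commF3 e (star e); rwa [star_star'] at h3
  have hpq : (e * star e) * (star e * e) = e := by
    calc (e * star e) * (star e * e) = e * (star e * (star e * e)) := by rw [mul_assoc]
      _ = e * ((star e * star e) * e) := by rw [← mul_assoc (star e)]
      _ = e * (star e * e) := by rw [hss]
      _ = e := by rw [← mul_assoc]; exact hF1e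
  have hqp : (star e * e) * (e * star e) = star e := by
    calc (star e * e) * (e * star e) = star e * (e * (e * star e)) := by rw [mul_assoc]
      _ = star e * ((e * e) * star e) := by rw [← mul_assoc e]
      _ = star e * (e * star e) := by rw [he]
      _ = star e := by rw [← mul_assoc]; exact hF1es
  rw [← hqp, ← hcomm]
  exact hpq

/-- idempotents of `S(E,C)` commute. -/
lemma idem_comm {e f : ASG.SEC G} (he : e * e = e) (hf : f * f = f) : e * f = f * e := by
  have h := regF1 (e * f)
  have hstar : star (e * f) = f * e := by rw [star_mul', idem_star he, idem_star hf]
  rw [hstar] at h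
  have h1 : (e * f) * (f * e) = (e * f) * e := by
    rw [mul_assoc e f (f * e), ← mul_assoc f f e, hf, ← mul_assoc]
  have hL : ((e * f) * (f * e)) * (e * f) = (e * f) * (e * f) := by
    rw [h1, mul_assoc, ← mul_assoc e e f, he]
  have hidem : (e * f) * (e * f) = e * f := by rw [← hL]; exact h
  have hfin := idem_star hidem
  rw [star_mul', idem_star he, idem_star hf] at hfin
  exact hfin.symm

/-- uniqueness of inverses. -/
lemma inv_unique (s a : ASG.SEC G) (h1 : s * a * s = s) (h2 : a * s * a = a) :
    a = star s := by
  set b := star s with hbdef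
  have hb1 : s * b * s = s := regF1 s
  have hb2 : b * s * b = b := by
    have := regF1 (star s); rwa [star_star'] at this
  have idem_as : (a * s) * (a * s) = a * s := by
    rw [mul_assoc, ← mul_assoc s a s, h1]
  have idem_bs : (b * s) * (b * s) = b * s := by
    rw [mul_assoc, ← mul_assoc s b s, hb1]
  have idem_sa : (s * a) * (s * a) = s * a := by
    rw [mul_assoc, ← mul_assoc a s a, h2]
  have idem_sb : (s * b) * (s * b) = s * b := by
    rw [mul_assoc, ← mul_assoc b s b, hb2]
  have comm1 : (a * s) * (b * s) = (b * s) * (a * s) := idem_comm idem_as idem_bs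
  have comm2 : (s * a) * (s * b) = (s * b) * (s * a) := idem_comm idem_sa idem_sb
  have hq : (s * a) * (s * b) = s * b := by rw [← mul_assoc, h1]
  have hp : (s * b) * (s * a) = s * a := by rw [← mul_assoc, hb1]
  have hbsa : b * (s * a) = b := by
    calc b * (s * a) = b * ((s * b) * (s * a)) := by rw [hp]
      _ = b * ((s * a) * (s * b)) := by rw [comm2]
      _ = b * (s * b) := by rw [hq]
      _ = b := by rw [← mul_assoc]; exact hb2
  have hq2 : (a * s) * (b * s) = a * s := by
    rw [mul_assoc, ← mul_assoc s b s, hb1]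
  have hp2 : (b * s) * (a * s) = b * s := by
    rw [mul_assoc, ← mul_assoc s a s, h1]
  have hasbs : a * s = b * s := by
    calc a * s = (a * s) * (b * s) := hq2.symm
      _ = (b * s) * (a * s) := comm1
      _ = b * s := hp2
  calc a = (a * s) * a := by rw [mul_assoc]; conv_lhs => rw [← h2]; rw [mul_assoc]
    _ = (b * s) * a := by rw [hasbs]
    _ = b * (s * a) := mul_assoc _ _ _
    _ = b := hbsa

end ASG
/-- For any adaptable separated graph `(E,C)`, the semigroup `S(E,C)` is an
inverse semigroup: any two idempotents commute, every `s` satisfies `s s* s = s` and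
`s* s s* = s*`, and `s*` is the unique element with these two properties. -/
theorem ASG.SEC.isInverseSemigroup (G : ASG) :
    (∀ e f : ASG.SEC G, ASG.IsIdem e → ASG.IsIdem f → e * f = f * e) ∧
    (∀ s : ASG.SEC G, s * star s * s = s ∧ star s * s * star s = star s) ∧
    (∀ s s' : ASG.SEC G, s * s' * s = s → s' * s * s' = s' → s' = star s) := by
  refine ⟨?_, ?_, ?_⟩
  · intro e f he hf
    exact ASG.idem_comm he hf
  · intro s
    refine ⟨ASG.regF1 s, ?_⟩
    have := ASG.regF1 (star s)
    rwa [ASG.star_star'] at this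
  · intro s a h1 h2
    exact ASG.inv_unique s a h1 h2
end

section
/- Let (E,C) be an adaptable separated graph, K a field with involution, p ∈ I_free, and let m₁ = ∏_{j=1}^{k(p)} α(p,j)^{k_j}(α(p,j)^*)^{k_j} and m₂ = ∏_{j=1}^{k(p)} α(p,j)^{l_j}(α(p,j)^*)^{l_j} be idempotent monomials at p. Let m₁ ∨ m₂ := ∏_{j=1}^{k(p)} α(p,j)^{min(k_j,l_j)}(α(p,j)^*)^{min(k_j,l_j)} (the least upper bound of m₁ and m₂ in 𝓔). Then in S_K(E,C) one has ι(m₁ ∨ m₂) = ι(m₁) ∨ ι(m₂) = ι(m₁) + ι(m₂) − ι(m₁)ι(m₂). -/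
/-! ## The `*`-algebra `S_K(E,C)` -/

/-- The extra algebra relations: the class of the zero of the semigroup is zero, and the
separated-graph relations `v = Σ_{e ∈ X} e e^*` for `v ∈ E^0`, `X ∈ C_v` (relations
(2.1)(ii)(d) and (1)(ii) of the paper).  The generating family is closed under scalars. -/
inductive ASG.ARel (K : Type) [Field K] (G : ASG) :
    MonoidAlgebra K (ASG.SEC G) → MonoidAlgebra K (ASG.SEC G) → Prop
  | zero (c : K) : ASG.ARel K G (MonoidAlgebra.single (0 : ASG.SEC G) c) 0
  | sums (c : K) (v : G.V) (X : Finset G.E) (hX : X ∈ G.C v) :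
      ASG.ARel K G (MonoidAlgebra.single (ASG.mkS G [.vert v]) c)
        (X.sum fun e => MonoidAlgebra.single
          (ASG.mkS G [.edge e] * star (ASG.mkS G [.edge e])) c)

/-- The `*`-algebra `S_K(E,C)`: the quotient of the semigroup algebra of `S(E,C)` over `K`
by the two-sided congruence generated by the relations above; equivalently, the `K`-algebra
presented by the generators `E⁰ ∪ E¹ ∪ {(tᵥⁱ)^{±1}}` and all the relations (2.1). -/
def ASG.SK (K : Type) [Field K] (G : ASG) : Type :=
  (ringConGen (ASG.ARel K G)).Quotient

noncomputable instance (K : Type) [Field K] (G : ASG) :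
    NonUnitalNonAssocRing (ASG.SK K G) := by
  unfold ASG.SK; infer_instance

/-- The natural representation `ι : S(E,C) → S_K(E,C)`. -/
noncomputable def ASG.iota (K : Type) [Field K] (G : ASG) (s : ASG.SEC G) : ASG.SK K G :=
  ((MonoidAlgebra.single s (1 : K) : MonoidAlgebra K (ASG.SEC G)) :
    (ringConGen (ASG.ARel K G)).Quotient)

/-- The join `⋁` of a (finite) list of pairwise commuting idempotents in a ring,
defined by iterating `x ∨ y := x + y - x y` (with `⋁ ∅ = 0`). -/
def joinList {A : Type} [NonUnitalNonAssocRing A] (l : List A) : A :=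
  l.foldr (fun x y => x + y - x * y) 0

/-- `l` is a finite cover of `F_e = {f ∈ 𝓔 : f ≤ e}`: it consists of idempotents `≤ e`,
and every nonzero idempotent `f ≤ e` satisfies `f z ≠ 0` for some `z ∈ l`. -/
def ASG.IsCoverList {G : ASG} (e : ASG.SEC G) (l : List (ASG.SEC G)) : Prop :=
  (∀ x ∈ l, ASG.IsIdem x ∧ x * e = x) ∧
  (∀ f : ASG.SEC G, ASG.IsIdem f → f ≠ 0 → f * e = f → ∃ z ∈ l, f * z ≠ 0)

/-- a list of pairwise orthogonal elements -/
def ASG.IsOrthList {G : ASG} (l : List (ASG.SEC G)) : Prop :=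
  ∀ x ∈ l, ∀ y ∈ l, x ≠ y → x * y = 0

/-- The word of the idempotent monomial `∏_{j} α(p,j)^{k_j} (α(p,j)^*)^{k_j}` at a free
prime `p`. -/
def ASG.idemMonWord (G : ASG) (p : G.I) (kk : Fin (G.k p) → ℕ) : List (ASG.Gen G) :=
  ASG.Gen.vert (G.fv p) ::
    (List.ofFn fun j => List.replicate (kk j) (ASG.Gen.edge (G.α p j)) ++
      List.replicate (kk j) (ASG.Gen.edgeS (G.α p j))).flatten

/-!
Everything happens in the corner monoid `v S v` at `v = v^p`, where the idempotents
`F_j(n) = α(p,j)ⁿ (α(p,j)^*)ⁿ` commute and satisfy `F_j(m) F_j(n) = F_j(max m n)`; hence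
`m₁ m₂ = m_max`, and it suffices to show `ι(m_min) + ι(m_max) = ι(m₁) + ι(m₂)`.
The separated-graph relation `v = α α^* + Σ_t β_t β_t^*` at `X_j` gives
`ι F_j(n) - ι F_j(n+1) = Σ_t ι(αⁿ β_t β_t^* α^{*n})`, and such terms for distinct `j` are
orthogonal since `β(p,i,t)^* β(p,j,t') = 0`. Thus differences of the `ι F_j` in distinct
coordinates are orthogonal, and the identity follows by induction over the coordinates.
-/

abbrev SemigroupCorner {S : Type*} [Semigroup S] (e : S) : Type _ :=
  {x : S // e * x = x ∧ x * e = x}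

namespace SemigroupCorner

variable {S : Type*} [Semigroup S] {e : S}

instance [he : Fact (IsIdempotentElem e)] : Monoid (SemigroupCorner e) where
  mul x y := ⟨x * y, by rw [← mul_assoc, x.2.1], by rw [mul_assoc, y.2.2]⟩
  mul_assoc x y z := Subtype.ext (mul_assoc (x : S) y z)
  one := ⟨e, he.out, he.out⟩
  one_mul x := Subtype.ext x.2.1
  mul_one x := Subtype.ext x.2.2

variable [Fact (IsIdempotentElem e)]

@[simp] theorem coe_mul (x y : SemigroupCorner e) : ((x * y : SemigroupCorner e) : S) = x * y :=
  rfl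

@[simp] theorem coe_one : ((1 : SemigroupCorner e) : S) = e := rfl

end SemigroupCorner

theorem pow_mul_pow_of_mul_eq_one {M : Type*} [Monoid M] {a b : M} (h : b * a = 1) (n : ℕ) :
    b ^ n * a ^ n = 1 := by
  induction n with
  | zero => rw [pow_zero, pow_zero, one_mul]
  | succ n ih => rw [pow_succ, pow_succ', mul_assoc, ← mul_assoc b, h, one_mul, ih]

theorem pow_mul_pow_mul_pow_mul_pow_of_mul_eq_one {M : Type*} [Monoid M] {a b : M}
    (h : b * a = 1) (m n : ℕ) :
    a ^ m * b ^ m * (a ^ n * b ^ n) = a ^ max m n * b ^ max m n := by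
  rcases le_total m n with hmn | hnm
  · obtain ⟨d, rfl⟩ := Nat.exists_eq_add_of_le hmn
    rw [max_eq_right hmn, pow_add a, ← mul_assoc, mul_assoc (a ^ m), ← mul_assoc (b ^ m),
      pow_mul_pow_of_mul_eq_one h, one_mul, ← pow_add]
  · obtain ⟨d, rfl⟩ := Nat.exists_eq_add_of_le' hnm
    rw [max_eq_left hnm, pow_add b, mul_assoc, mul_assoc (b ^ d), ← mul_assoc (b ^ n),
      pow_mul_pow_of_mul_eq_one h, one_mul]

theorem prod_map_mul_prod_map_of_mul_eq_max {ι M : Type*} [Monoid M] {F : ι → ℕ → M}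
    (hcomm : ∀ i j m n, Commute (F i m) (F j n))
    (hmax : ∀ j m n, F j m * F j n = F j (max m n)) (l : List ι) (u v : ι → ℕ) :
    (l.map fun j => F j (u j)).prod * (l.map fun j => F j (v j)).prod =
      (l.map fun j => F j (max (u j) (v j))).prod := by
  induction l with
  | nil => exact one_mul 1
  | cons i l ih =>
    have hX : Commute (l.map fun j => F j (u j)).prod (F i (v i)) :=
      Commute.list_prod_left _ _ fun x hx => by
        obtain ⟨j, -, rfl⟩ := List.mem_map.mp hx
        exact hcomm _ _ _ _
    simp only [List.map_cons, List.prod_cons]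
    rw [mul_assoc, ← mul_assoc _ (F i (v i)), hX.eq, mul_assoc, ih, ← mul_assoc, hmax]

theorem sub_mul_sub_eq_zero_of_succ {R : Type*} [NonUnitalNonAssocRing R] {x y : ℕ → R}
    (h : ∀ s s', (x s - x (s + 1)) * (y s' - y (s' + 1)) = 0) (m n m' n' : ℕ) :
    (x m - x n) * (y m' - y n') = 0 := by
  have hzero : ∀ n n', (x 0 - x n) * (y 0 - y n') = 0 := fun n n' => by
    rw [← Finset.sum_range_sub', ← Finset.sum_range_sub', Finset.sum_mul_sum]
    exact Finset.sum_eq_zero fun s _ => Finset.sum_eq_zero fun s' _ => h s s'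
  have hx : x m - x n = (x 0 - x n) - (x 0 - x m) := by abel
  have hy : y m' - y n' = (y 0 - y n') - (y 0 - y m') := by abel
  rw [hx, hy, mul_sub, sub_mul (x 0 - x n), sub_mul (x 0 - x n)]
  simp only [hzero, sub_self]

theorem mul_add_mul_eq_of_sub_mul_sub_eq_zero {R : Type*} [NonUnitalRing R] {a b x y x' y' : R}
    (h : (a - b) * (x - x') = 0) (hsum : x + y = x' + y') :
    a * x + b * y = a * x' + b * y' := by
  obtain rfl : y = x' + y' - x := eq_sub_of_add_eq' hsum
  rw [← sub_eq_zero, ← h]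
  noncomm_ring

section ChainFamily

variable {ι M R : Type*} [Monoid M] [NonUnitalRing R] (f : M →ₙ* R) {F : ι → ℕ → M}
  (hcomm : ∀ i j m n, Commute (F i m) (F j n))
  (horth : ∀ i j, i ≠ j → ∀ m n m' n',
    (f (F i m) - f (F i n)) * (f (F j m') - f (F j n')) = 0)
include hcomm horth

theorem sub_mul_map_prod_sub_map_prod_eq_zero {j : ι} {l : List ι} (hj : j ∉ l)
    (m n : ℕ) (u u' : ι → ℕ) :
    (f (F j m) - f (F j n)) *
      (f (l.map fun k => F k (u k)).prod - f (l.map fun k => F k (u' k)).prod) = 0 := by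
  induction l with
  | nil => rw [List.map_nil, List.map_nil, sub_self, mul_zero]
  | cons i l ih =>
    obtain ⟨hji, hjl⟩ : j ≠ i ∧ j ∉ l := by simpa only [List.mem_cons, not_or] using hj
    simp only [List.map_cons, List.prod_cons, map_mul]
    set x := f (l.map fun k => F k (u k)).prod
    set x' := f (l.map fun k => F k (u' k)).prod
    have hsplit : f (F i (u i)) * x - f (F i (u' i)) * x' =
        f (F i (u i)) * (x - x') + (f (F i (u i)) - f (F i (u' i))) * x' := by
      noncomm_ring
    have hd : Commute (f (F j m) - f (F j n)) (f (F i (u i))) :=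
      ((hcomm _ _ _ _).map f).sub_left ((hcomm _ _ _ _).map f)
    rw [hsplit, mul_add, ← mul_assoc, hd.eq, mul_assoc, ih hjl, ← mul_assoc,
      horth j i hji, mul_zero, zero_mul, add_zero]

theorem map_prod_min_add_map_prod_max {l : List ι} (hl : l.Nodup) (u v : ι → ℕ) :
    f (l.map fun j => F j (min (u j) (v j))).prod +
        f (l.map fun j => F j (max (u j) (v j))).prod =
      f (l.map fun j => F j (u j)).prod + f (l.map fun j => F j (v j)).prod := by
  induction l with
  | nil => rfl
  | cons i l ih =>
    obtain ⟨hil, hl⟩ := List.nodup_cons.mp hl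
    have horth_tail := sub_mul_map_prod_sub_map_prod_eq_zero f hcomm horth hil
    simp only [List.map_cons, List.prod_cons, map_mul]
    rcases le_total (u i) (v i) with h | h
    · rw [min_eq_left h, max_eq_right h]
      exact mul_add_mul_eq_of_sub_mul_sub_eq_zero (horth_tail _ _ _ _) (ih hl)
    · rw [min_eq_right h, max_eq_left h, add_comm (f (F i (u i)) * _)]
      exact mul_add_mul_eq_of_sub_mul_sub_eq_zero (horth_tail _ _ _ _)
        ((ih hl).trans (add_comm _ _))

end ChainFamily

namespace ASG

variable {G : ASG}

instance : SemigroupWithZero (SEC G) :=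
  { (inferInstance : Semigroup (SEC G)) with
    zero := 0
    zero_mul := fun x => Quotient.inductionOn x fun w => congrArg (Quotient.mk _) (zero_mul w)
    mul_zero := fun x => Quotient.inductionOn x fun w => congrArg (Quotient.mk _) (mul_zero w) }

def ofGen (G : ASG) (x : Gen G) : SEC G := Quotient.mk (secSetoid G) (ofg x)

theorem sstar_ofg_mul_ofg (x y : Gen G) : sstar (ofg x * ofg y) = ofg y.star * ofg x.star :=
  rfl

theorem ofGen_mul_ofGen_of_rb {x y : Gen G} {w : PreS G} (h : RB G (ofg x * ofg y) w) :
    ofGen G x * ofGen G y = Quotient.mk _ w :=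
  Quotient.sound (SR.of h)

theorem ofGen_star_mul_ofGen_star_of_rb {x y : Gen G} {w : PreS G} (h : RB G (ofg x * ofg y) w) :
    ofGen G y.star * ofGen G x.star = Quotient.mk _ (sstar w) := by
  have h' := Quotient.sound (s := secSetoid G) (SR.star (SR.of h))
  rw [sstar_ofg_mul_ofg] at h'
  exact h'

section FreePrime

variable {p : G.I}

def vtx (G : ASG) (p : G.I) : SEC G := ofGen G (.vert (G.fv p))

instance : Fact (IsIdempotentElem (vtx G p)) := ⟨ofGen_mul_ofGen_of_rb (RB.vv _)⟩

variable (hp : G.free p)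
include hp

def loop (j : Fin (G.k p)) : SemigroupCorner (vtx G p) :=
  ⟨ofGen G (.edge (G.α p j)),
    by have h := ofGen_mul_ofGen_of_rb (RB.se (G := G) (G.α p j)); rwa [G.α_src p hp j] at h,
    by have h := ofGen_mul_ofGen_of_rb (RB.er (G := G) (G.α p j)); rwa [G.α_rng p hp j] at h⟩

def loopStar (j : Fin (G.k p)) : SemigroupCorner (vtx G p) :=
  ⟨ofGen G (.edgeS (G.α p j)),
    by have h := ofGen_star_mul_ofGen_star_of_rb (RB.er (G := G) (G.α p j))
       rwa [G.α_rng p hp j] at h,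
    by have h := ofGen_star_mul_ofGen_star_of_rb (RB.se (G := G) (G.α p j))
       rwa [G.α_src p hp j] at h⟩

@[simp] theorem coe_loop (j : Fin (G.k p)) : (loop hp j : SEC G) = ofGen G (.edge (G.α p j)) :=
  rfl

@[simp] theorem coe_loopStar (j : Fin (G.k p)) :
    (loopStar hp j : SEC G) = ofGen G (.edgeS (G.α p j)) :=
  rfl

theorem loopStar_mul_loop (j : Fin (G.k p)) : loopStar hp j * loop hp j = 1 := by
  have h := ofGen_mul_ofGen_of_rb (RB.ee (G := G) (G.α p j))
  rw [G.α_rng p hp j] at h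
  exact Subtype.ext h

variable {i j : Fin (G.k p)}

theorem commute_loop_loop (hij : i ≠ j) : Commute (loop hp i) (loop hp j) :=
  Subtype.ext (ofGen_mul_ofGen_of_rb (RB.acomm p hp i j hij))

theorem commute_loop_loopStar (hij : i ≠ j) : Commute (loop hp i) (loopStar hp j) :=
  Subtype.ext (ofGen_mul_ofGen_of_rb (RB.acommS p hp i j hij))

theorem commute_loopStar_loopStar (hij : i ≠ j) : Commute (loopStar hp i) (loopStar hp j) :=
  Subtype.ext (ofGen_star_mul_ofGen_star_of_rb (RB.acomm p hp j i hij.symm))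

def loopProj (j : Fin (G.k p)) (n : ℕ) : SemigroupCorner (vtx G p) :=
  loop hp j ^ n * loopStar hp j ^ n

theorem loopProj_mul_loopProj (j : Fin (G.k p)) (m n : ℕ) :
    loopProj hp j m * loopProj hp j n = loopProj hp j (max m n) :=
  pow_mul_pow_mul_pow_mul_pow_of_mul_eq_one (loopStar_mul_loop hp j) m n

theorem commute_loopProj (i j : Fin (G.k p)) (m n : ℕ) :
    Commute (loopProj hp i m) (loopProj hp j n) := by
  rcases eq_or_ne i j with rfl | hij
  · rw [Commute, SemiconjBy, loopProj_mul_loopProj, loopProj_mul_loopProj, max_comm]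
  · exact Commute.mul_left
      (((commute_loop_loop hp hij).pow_pow m n).mul_right
        ((commute_loop_loopStar hp hij).pow_pow m n))
      ((((commute_loop_loopStar hp hij.symm).symm).pow_pow m n).mul_right
        ((commute_loopStar_loopStar hp hij).pow_pow m n))

theorem vtx_mul_conn (t : Fin (G.g p j)) :
    vtx G p * ofGen G (.edge (G.β p j t)) = ofGen G (.edge (G.β p j t)) := by
  have h := ofGen_mul_ofGen_of_rb (RB.se (G := G) (G.β p j t))
  rwa [G.β_src p hp j t] at h

theorem connStar_mul_vtx (t : Fin (G.g p j)) :
    ofGen G (.edgeS (G.β p j t)) * vtx G p = ofGen G (.edgeS (G.β p j t)) := by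
  have h := ofGen_star_mul_ofGen_star_of_rb (RB.se (G := G) (G.β p j t))
  rwa [G.β_src p hp j t] at h

def connProj (j : Fin (G.k p)) (t : Fin (G.g p j)) : SemigroupCorner (vtx G p) :=
  ⟨ofGen G (.edge (G.β p j t)) * ofGen G (.edgeS (G.β p j t)),
    by rw [← mul_assoc, vtx_mul_conn hp], by rw [mul_assoc, connStar_mul_vtx hp]⟩

@[simp] theorem coe_connProj (t : Fin (G.g p j)) :
    (connProj hp j t : SEC G) = ofGen G (.edge (G.β p j t)) * ofGen G (.edgeS (G.β p j t)) :=
  rfl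

theorem connStar_mul_conn_of_ne (hij : i ≠ j) (t : Fin (G.g p i)) (t' : Fin (G.g p j)) :
    ofGen G (.edgeS (G.β p i t)) * ((1 : SemigroupCorner (vtx G p)) : SEC G) *
      ofGen G (.edge (G.β p j t')) = 0 := by
  rw [SemigroupCorner.coe_one, connStar_mul_vtx hp]
  exact ofGen_mul_ofGen_of_rb (RB.bb p hp i j hij t t')

theorem connStar_mul_loop (hij : i ≠ j) (t : Fin (G.g p i)) :
    ofGen G (.edgeS (G.β p i t)) * ofGen G (.edge (G.α p j)) =
      ofGen G (.t (G.rng (G.β p i t)) (sig i j)) * ofGen G (.edgeS (G.β p i t)) :=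
  ofGen_star_mul_ofGen_star_of_rb (RB.aSb p hp j i hij.symm t)

theorem loopStar_mul_conn (hij : i ≠ j) (t : Fin (G.g p j)) :
    ofGen G (.edgeS (G.α p i)) * ofGen G (.edge (G.β p j t)) =
      ofGen G (.edge (G.β p j t)) * ofGen G (.tI (G.rng (G.β p j t)) (sig j i)) :=
  ofGen_mul_ofGen_of_rb (RB.aSb p hp i j hij t)

theorem connStar_mul_loop_pow_mul (hij : i ≠ j) {t : Fin (G.g p i)} {t' : Fin (G.g p j)}
    {x : SemigroupCorner (vtx G p)}
    (hx : ofGen G (.edgeS (G.β p i t)) * x * ofGen G (.edge (G.β p j t')) = 0) (n : ℕ) :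
    ofGen G (.edgeS (G.β p i t)) * ↑(loop hp j ^ n * x) * ofGen G (.edge (G.β p j t')) = 0 := by
  induction n with
  | zero => rwa [pow_zero, one_mul]
  | succ n ih =>
    rw [pow_succ', mul_assoc (loop hp j), SemigroupCorner.coe_mul, coe_loop]
    simp only [← mul_assoc]
    rw [connStar_mul_loop hp hij]
    simp only [mul_assoc] at ih ⊢
    rw [ih, mul_zero]

theorem connStar_mul_mul_loopStar_pow (hij : i ≠ j) {t : Fin (G.g p i)} {t' : Fin (G.g p j)}
    {x : SemigroupCorner (vtx G p)}
    (hx : ofGen G (.edgeS (G.β p i t)) * x * ofGen G (.edge (G.β p j t')) = 0) (n : ℕ) :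
    ofGen G (.edgeS (G.β p i t)) * ↑(x * loopStar hp i ^ n) *
      ofGen G (.edge (G.β p j t')) = 0 := by
  induction n with
  | zero => rwa [pow_zero, mul_one]
  | succ n ih =>
    rw [pow_succ, ← mul_assoc x, SemigroupCorner.coe_mul, coe_loopStar]
    simp only [mul_assoc]
    rw [loopStar_mul_conn hp hij]
    simp only [← mul_assoc]
    rw [ih, zero_mul]

def branchProj (j : Fin (G.k p)) (n : ℕ) (t : Fin (G.g p j)) : SemigroupCorner (vtx G p) :=
  loop hp j ^ n * connProj hp j t * loopStar hp j ^ n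

theorem coe_branchProj_mul_branchProj (hij : i ≠ j) (s s' : ℕ) (t : Fin (G.g p i))
    (t' : Fin (G.g p j)) :
    ((branchProj hp i s t * branchProj hp j s' t' : SemigroupCorner (vtx G p)) : SEC G) = 0 := by
  have hcore : ofGen G (.edgeS (G.β p i t)) * ↑(loop hp j ^ s' * (1 * loopStar hp i ^ s)) *
      ofGen G (.edge (G.β p j t')) = 0 :=
    connStar_mul_loop_pow_mul hp hij
      (connStar_mul_mul_loopStar_pow hp hij (connStar_mul_conn_of_ne hp hij t t') s) s'
  rw [one_mul, ← ((commute_loop_loopStar hp hij.symm).symm.pow_pow s s').eq] at hcore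
  calc ((branchProj hp i s t * branchProj hp j s' t' : SemigroupCorner (vtx G p)) : SEC G)
      = ↑(loop hp i ^ s) * ofGen G (.edge (G.β p i t)) *
          (ofGen G (.edgeS (G.β p i t)) * ↑(loopStar hp i ^ s * loop hp j ^ s') *
            ofGen G (.edge (G.β p j t'))) *
          (ofGen G (.edgeS (G.β p j t')) * ↑(loopStar hp j ^ s')) := by
        simp only [branchProj, SemigroupCorner.coe_mul, coe_connProj, mul_assoc]
    _ = 0 := by rw [hcore, mul_zero, zero_mul]

def idemMon (u : Fin (G.k p) → ℕ) : SemigroupCorner (vtx G p) :=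
  ((List.finRange (G.k p)).map fun j => loopProj hp j (u j)).prod

theorem idemMon_mul_idemMon (u v : Fin (G.k p) → ℕ) :
    idemMon hp u * idemMon hp v = idemMon hp fun j => max (u j) (v j) :=
  prod_map_mul_prod_map_of_mul_eq_max (commute_loopProj hp) (loopProj_mul_loopProj hp) _ u v

end FreePrime

def evalWord (x : SEC G) (w : List (Gen G)) : SEC G :=
  w.foldl (fun acc g => acc * ofGen G g) x

theorem mk_foldl (w : List (Gen G)) (x : PreS G) :
    (Quotient.mk (secSetoid G) (w.foldl (fun acc g => acc * ofg g) x) : SEC G) =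
      evalWord (Quotient.mk _ x) w := by
  induction w generalizing x with
  | nil => rfl
  | cons g w ih => exact ih (x * ofg g)

theorem mkS_cons (g : Gen G) (w : List (Gen G)) : mkS G (g :: w) = evalWord (ofGen G g) w :=
  mk_foldl w (ofg g)

theorem evalWord_append (x : SEC G) (w₁ w₂ : List (Gen G)) :
    evalWord x (w₁ ++ w₂) = evalWord (evalWord x w₁) w₂ :=
  List.foldl_append

theorem evalWord_replicate {e : SEC G} [Fact (IsIdempotentElem e)] {c : SemigroupCorner e}
    {g : Gen G} (hc : (c : SEC G) = ofGen G g) (x : SemigroupCorner e) (n : ℕ) :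
    evalWord x (List.replicate n g) = ↑(x * c ^ n) := by
  induction n generalizing x with
  | zero => rw [pow_zero, mul_one]; rfl
  | succ n ih =>
    rw [List.replicate_succ, evalWord, List.foldl_cons, ← hc, pow_succ', ← mul_assoc]
    exact ih (x * c)

theorem mkS_idemMonWord {p : G.I} (hp : G.free p) (u : Fin (G.k p) → ℕ) :
    mkS G (idemMonWord G p u) = idemMon hp u := by
  have hflat : ∀ (l : List (Fin (G.k p))) (x : SemigroupCorner (vtx G p)),
      evalWord x (l.map fun j => List.replicate (u j) (Gen.edge (G.α p j)) ++
        List.replicate (u j) (Gen.edgeS (G.α p j))).flatten =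
      ↑(x * (l.map fun j => loopProj hp j (u j)).prod) := by
    intro l
    induction l with
    | nil => intro x; rw [List.map_nil, List.map_nil, List.prod_nil, mul_one]; rfl
    | cons j l ih =>
      intro x
      rw [List.map_cons, List.flatten_cons, evalWord_append, evalWord_append,
        evalWord_replicate (coe_loop hp j), evalWord_replicate (coe_loopStar hp j), ih]
      simp only [List.map_cons, List.prod_cons, loopProj, mul_assoc]
  rw [idemMonWord, mkS_cons, List.ofFn_eq_map, ← one_mul (idemMon hp u)]
  exact hflat _ 1

section Algebra

variable (K : Type) [Field K]

noncomputable instance : NonUnitalRing (SK K G) := by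
  unfold SK; infer_instance

theorem iota_mul (s t : SEC G) : iota K G (s * t) = iota K G s * iota K G t := by
  have h := RingCon.coe_mul (c := ringConGen (ARel K G)) (MonoidAlgebra.single s (1 : K))
    (MonoidAlgebra.single t 1)
  rwa [MonoidAlgebra.single_mul_single, one_mul] at h

theorem iota_zero : iota K G 0 = 0 :=
  (RingCon.eq _).mpr (RingConGen.Rel.of _ _ (ARel.zero 1))

theorem iota_vertex_eq_sum (v : G.V) {X : Finset G.E} (hX : X ∈ G.C v) :
    iota K G (ofGen G (.vert v)) =
      ∑ e ∈ X, iota K G (ofGen G (.edge e) * ofGen G (.edgeS e)) := by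
  have h := (RingCon.eq (ringConGen (ARel K G))).mpr
    (RingConGen.Rel.of _ _ (ARel.sums (K := K) 1 v X hX))
  exact h.trans (map_sum (AddMonoidHom.mk' (fun x : MonoidAlgebra K (SEC G) =>
    (x : (ringConGen (ARel K G)).Quotient)) (RingCon.coe_add _)) _ X)

noncomputable def cornerIota (G : ASG) (p : G.I) : SemigroupCorner (vtx G p) →ₙ* SK K G where
  toFun x := iota K G x
  map_mul' x y := iota_mul K (x : SEC G) y

variable {p : G.I} (hp : G.free p)
include hp

theorem cornerIota_one (j : Fin (G.k p)) :
    cornerIota K G p 1 = cornerIota K G p (loop hp j * loopStar hp j) +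
      ∑ t, cornerIota K G p (connProj hp j t) := by
  have hX := (G.X_def p hp _).mpr ⟨j, rfl⟩
  have hα : G.α p j ∉ Finset.image (G.β p j) Finset.univ := by
    simp only [Finset.mem_image, Finset.mem_univ, true_and, not_exists]
    exact fun t h => G.α_ne_β p hp j j t h.symm
  have hβ : Set.InjOn (G.β p j) (Finset.univ : Finset (Fin (G.g p j))) := fun t _ t' _ h => by
    simpa using G.β_inj p hp (a₁ := ⟨j, t⟩) (a₂ := ⟨j, t'⟩) h
  change iota K G (ofGen G (.vert (G.fv p))) = _
  rw [iota_vertex_eq_sum K _ hX, Finset.sum_insert hα, Finset.sum_image hβ]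
  rfl

theorem cornerIota_loopProj (j : Fin (G.k p)) (n : ℕ) :
    cornerIota K G p (loopProj hp j n) = cornerIota K G p (loopProj hp j (n + 1)) +
      ∑ t, cornerIota K G p (branchProj hp j n t) := by
  have hsucc : loopProj hp j (n + 1) = loop hp j ^ n * (loop hp j * loopStar hp j) *
      loopStar hp j ^ n := by
    rw [loopProj, pow_succ, pow_succ', mul_assoc, mul_assoc, mul_assoc]
  have hn : loopProj hp j n = loop hp j ^ n * 1 * loopStar hp j ^ n := by
    rw [loopProj, mul_one]
  simp only [hn, hsucc, branchProj, map_mul, cornerIota_one K hp j, mul_add, add_mul,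
    Finset.mul_sum, Finset.sum_mul]

theorem cornerIota_loopProj_sub_mul_sub (i j : Fin (G.k p)) (hij : i ≠ j) (m n m' n' : ℕ) :
    (cornerIota K G p (loopProj hp i m) - cornerIota K G p (loopProj hp i n)) *
      (cornerIota K G p (loopProj hp j m') - cornerIota K G p (loopProj hp j n')) = 0 := by
  refine sub_mul_sub_eq_zero_of_succ (x := fun n => cornerIota K G p (loopProj hp i n))
    (y := fun n => cornerIota K G p (loopProj hp j n)) (fun s s' => ?_) m n m' n'
  rw [cornerIota_loopProj K hp i s, cornerIota_loopProj K hp j s', add_sub_cancel_left,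
    add_sub_cancel_left, Finset.sum_mul_sum]
  refine Finset.sum_eq_zero fun t _ => Finset.sum_eq_zero fun t' _ => ?_
  rw [← map_mul]
  exact (congrArg (iota K G) (coe_branchProj_mul_branchProj hp hij s s' t t')).trans
    (iota_zero K)

end Algebra

end ASG

theorem ASG.iota_join_general (K : Type) [Field K] (G : ASG)
    (p : G.I) (hp : G.free p) (kk ll : Fin (G.k p) → ℕ) :
    ASG.iota K G (ASG.mkS G (ASG.idemMonWord G p (fun j => min (kk j) (ll j)))) =
      ASG.iota K G (ASG.mkS G (ASG.idemMonWord G p kk)) +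
        ASG.iota K G (ASG.mkS G (ASG.idemMonWord G p ll)) -
        ASG.iota K G (ASG.mkS G (ASG.idemMonWord G p kk)) *
          ASG.iota K G (ASG.mkS G (ASG.idemMonWord G p ll)) := by
  simp only [ASG.mkS_idemMonWord hp]
  change ASG.cornerIota K G p _ = ASG.cornerIota K G p _ + ASG.cornerIota K G p _ -
    ASG.cornerIota K G p _ * ASG.cornerIota K G p _
  rw [← map_mul, ASG.idemMon_mul_idemMon]
  exact eq_sub_of_add_eq (map_prod_min_add_map_prod_max (ASG.cornerIota K G p)
    (ASG.commute_loopProj hp) (ASG.cornerIota_loopProj_sub_mul_sub K hp)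
    (List.nodup_finRange _) kk ll)

/-- Let `(E,C)` be an adaptable separated graph, `K` a field with
involution, `p ∈ I_free`, and let `m₁ = ∏_j α(p,j)^{k_j}(α(p,j)^*)^{k_j}` and
`m₂ = ∏_j α(p,j)^{l_j}(α(p,j)^*)^{l_j}` be idempotent monomials at `p`.  With
`m₁ ∨ m₂ := ∏_j α(p,j)^{min(k_j,l_j)}(α(p,j)^*)^{min(k_j,l_j)}` (the least upper bound of
`m₁` and `m₂` in `𝓔`), in `S_K(E,C)` one has
`ι(m₁ ∨ m₂) = ι(m₁) ∨ ι(m₂) = ι(m₁) + ι(m₂) − ι(m₁)ι(m₂)`. -/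
theorem ASG.iota_join (K : Type) [Field K] [StarRing K] (G : ASG)
    (p : G.I) (hp : G.free p) (kk ll : Fin (G.k p) → ℕ) :
    ASG.iota K G (ASG.mkS G (ASG.idemMonWord G p (fun j => min (kk j) (ll j)))) =
      ASG.iota K G (ASG.mkS G (ASG.idemMonWord G p kk)) +
        ASG.iota K G (ASG.mkS G (ASG.idemMonWord G p ll)) -
        ASG.iota K G (ASG.mkS G (ASG.idemMonWord G p kk)) *
          ASG.iota K G (ASG.mkS G (ASG.idemMonWord G p ll)) :=
  ASG.iota_join_general K G p hp kk ll
end
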